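/- arXiv:0708.0758 — 7 statements merged into one kernel-verified Lean document; each statement's English description precedes it below -/
import Mathlib

section
/- Let F be a free group of rank m and let ℤ^r be the free abelian group of rank r with basis t_1, …, t_r, where r ≤ m. If φ : F → ℤ^r is a surjective group homomorphism, then there exists a basis e_1, …, e_m of the free group F such that φ(e_i) = t_i for 1 ≤ i ≤ r and φ(e_i) = 0 for r+1 ≤ i ≤ m. -/
/-!
Nielsen moves (multiplying one basis element on the right by a power of another, or inverting one
basis element) carry free bases to free bases, and on the images `φ (e i) ∈ ℤ^r` they act as
elementary row operations on the `m × r` integer matrix with these rows. As `φ` is surjective the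
rows generate `ℤ^r`, and the Euclidean algorithm reduces the matrix column by column to the identity
above zero rows: in column `k`, division with remainder among the rows `k, k+1, …` leaves a single
nonzero entry there, which is `±1` because the rows still generate `ℤ^r`; after fixing its sign
it is moved into row `k` and used to clear the rest of the column. The moves performed on the
matrix then lift to moves on the basis of `F`.
-/

/-- The element `t_i` of the free abelian group `ℤ^r` (written multiplicatively),
with basis `t_1, …, t_r` realised as the coordinate vectors `Pi.single i 1`. -/
def tbasis (r : ℕ) (i : Fin r) : Multiplicative (Fin r → ℤ) :=
  Multiplicative.ofAdd (Pi.single i (1 : ℤ))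

/-- A family `e : Fin m → F` is a basis of the free group `F` (of rank `m`) if the induced
homomorphism from the free group on `m` letters is an isomorphism. -/
def IsFreeBasis {F : Type} [Group F] {m : ℕ} (e : Fin m → F) : Prop :=
  Function.Bijective (FreeGroup.lift e : FreeGroup (Fin m) →* F)

open Function

inductive NielsenMove (ι : Type*)
  | transvection (i j : ι) (hij : i ≠ j) (n : ℤ)
  | invert (i : ι)

namespace NielsenMove

variable {ι G H : Type*} [Group G] [Group H]

def inverse : NielsenMove ι → NielsenMove ι
  | transvection i j hij n => transvection i j hij (-n)
  | invert i => invert i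

theorem inverse_inverse (m : NielsenMove ι) : m.inverse.inverse = m := by
  cases m <;> simp [inverse]

variable [DecidableEq ι]

def apply : NielsenMove ι → (ι → G) → ι → G
  | transvection i j _ n, v => update v i (v i * v j ^ n)
  | invert i, v => update v i (v i)⁻¹

theorem inverse_apply_apply (m : NielsenMove ι) (v : ι → G) :
    m.inverse.apply (m.apply v) = v := by
  cases m with
  | transvection i j hij n =>
    simp [apply, inverse, update_of_ne hij.symm, mul_assoc]
  | invert i => simp [apply, inverse]

theorem comp_apply (f : G →* H) (m : NielsenMove ι) (v : ι → G) :
    f ∘ m.apply v = m.apply (f ∘ v) := by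
  cases m <;> simp [apply, comp_update]

theorem lift_apply (m : NielsenMove ι) (v : ι → G) :
    FreeGroup.lift (m.apply v) = (FreeGroup.lift v).comp (FreeGroup.lift (m.apply FreeGroup.of)) :=
  FreeGroup.ext_hom _ _ fun i => by
    have hv : ⇑(FreeGroup.lift v) ∘ FreeGroup.of = v := funext fun _ => FreeGroup.lift_apply_of
    have h := congrFun (comp_apply (FreeGroup.lift v) m FreeGroup.of) i
    rw [hv] at h
    simpa using h.symm

theorem lift_comp_lift_inverse_apply_of (m : NielsenMove ι) :
    (FreeGroup.lift (m.apply FreeGroup.of)).comp (FreeGroup.lift (m.inverse.apply FreeGroup.of)) =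
      MonoidHom.id (FreeGroup ι) := by
  rw [← lift_apply, inverse_apply_apply, FreeGroup.lift_of_eq_id]

theorem bijective_lift_apply_of (m : NielsenMove ι) :
    Bijective (FreeGroup.lift (m.apply (FreeGroup.of : ι → FreeGroup ι))) := by
  refine ⟨LeftInverse.injective (g := FreeGroup.lift (m.inverse.apply FreeGroup.of)) fun x => ?_,
    RightInverse.surjective (g := FreeGroup.lift (m.inverse.apply FreeGroup.of)) fun x => ?_⟩
  · simpa [inverse_inverse] using DFunLike.congr_fun (lift_comp_lift_inverse_apply_of m.inverse) x
  · exact DFunLike.congr_fun (lift_comp_lift_inverse_apply_of m) x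

@[simp]
theorem transvection_apply_self (v : ι → G) {i j : ι} (hij : i ≠ j) (n : ℤ) :
    (transvection i j hij n).apply v i = v i * v j ^ n := by
  simp [apply]

@[simp]
theorem transvection_apply_of_ne (v : ι → G) {i j i' : ι} (hij : i ≠ j) (n : ℤ) (h : i' ≠ i) :
    (transvection i j hij n).apply v i' = v i' := by
  simp [apply, h]

@[simp]
theorem invert_apply_self (v : ι → G) (i : ι) : (invert i).apply v i = (v i)⁻¹ := by
  simp [apply]

@[simp]
theorem invert_apply_of_ne (v : ι → G) {i i' : ι} (h : i' ≠ i) : (invert i).apply v i' = v i' := by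
  simp [apply, h]

end NielsenMove

variable {ι G H : Type*} [DecidableEq ι] [Group G] [Group H]

def NielsenEquivalent (v w : ι → G) : Prop :=
  Relation.ReflTransGen (fun v w => ∃ m : NielsenMove ι, m.apply v = w) v w

namespace NielsenEquivalent

theorem refl (v : ι → G) : NielsenEquivalent v v := Relation.ReflTransGen.refl

theorem trans {u v w : ι → G} (huv : NielsenEquivalent u v) (hvw : NielsenEquivalent v w) :
    NielsenEquivalent u w :=
  Relation.ReflTransGen.trans huv hvw

theorem move {v w : ι → G} (h : NielsenEquivalent v w) (m : NielsenMove ι) :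
    NielsenEquivalent v (m.apply w) :=
  Relation.ReflTransGen.tail h ⟨m, rfl⟩

theorem move_left {v w : ι → G} (m : NielsenMove ι) (h : NielsenEquivalent (m.apply v) w) :
    NielsenEquivalent v w :=
  Relation.ReflTransGen.head ⟨m, rfl⟩ h

theorem exists_bijective_comp {v w : ι → G} (h : NielsenEquivalent v w) :
    ∃ g : FreeGroup ι →* FreeGroup ι,
      Bijective g ∧ FreeGroup.lift w = (FreeGroup.lift v).comp g := by
  induction h with
  | refl => exact ⟨MonoidHom.id _, bijective_id, rfl⟩
  | tail _ hstep ih =>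
    obtain ⟨m, rfl⟩ := hstep
    obtain ⟨g, hg, hw⟩ := ih
    exact ⟨g.comp (FreeGroup.lift (m.apply FreeGroup.of)), hg.comp m.bijective_lift_apply_of,
      by rw [m.lift_apply, hw, MonoidHom.comp_assoc]⟩

theorem surjective_lift {v w : ι → G} (h : NielsenEquivalent v w)
    (hv : Surjective (FreeGroup.lift v)) : Surjective (FreeGroup.lift w) := by
  obtain ⟨g, hg, hw⟩ := h.exists_bijective_comp
  rw [hw, MonoidHom.coe_comp]
  exact hv.comp hg.surjective

theorem isFreeBasis {F : Type} [Group F] {m : ℕ} {e e' : Fin m → F} (h : NielsenEquivalent e e')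
    (he : IsFreeBasis e) : IsFreeBasis e' := by
  obtain ⟨g, hg, he'⟩ := h.exists_bijective_comp
  unfold IsFreeBasis
  rw [he', MonoidHom.coe_comp]
  exact he.comp hg

theorem exists_lift (f : G →* H) {v : ι → G} {w : ι → H} (h : NielsenEquivalent (f ∘ v) w) :
    ∃ v', NielsenEquivalent v v' ∧ f ∘ v' = w := by
  induction h with
  | refl => exact ⟨v, refl v, rfl⟩
  | tail _ hstep ih =>
    obtain ⟨m, rfl⟩ := hstep
    obtain ⟨v', hv', rfl⟩ := ih
    exact ⟨m.apply v', hv'.move m, m.comp_apply f v'⟩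

theorem mul_zpow_pivot [Fintype ι] (v : ι → G) (i₀ : ι) (n : ι → ℤ) (hn : n i₀ = 0) :
    NielsenEquivalent v (fun i => v i * v i₀ ^ n i) := by
  suffices ∀ s : Finset ι, i₀ ∉ s →
      NielsenEquivalent v (fun i => if i ∈ s then v i * v i₀ ^ n i else v i) by
    convert this (Finset.univ.erase i₀) (by simp) using 2 with i
    by_cases h : i = i₀ <;> simp [h, hn]
  intro s
  induction s using Finset.induction_on with
  | empty => simpa using refl v
  | insert a s ha ih =>
    intro hs
    rw [Finset.mem_insert, not_or] at hs
    convert (ih hs.2).move (.transvection a i₀ (Ne.symm hs.1) (n a)) using 1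
    funext i
    by_cases hi : i = a
    · subst hi; simp [ha, hs.2]
    · simp [hi]

end NielsenEquivalent

theorem exists_sum_zsmul_eq_toAdd [Fintype ι] {A : Type*} [AddCommGroup A]
    {v : ι → Multiplicative A} (hv : Surjective (FreeGroup.lift v)) (x : Multiplicative A) :
    ∃ n : ι → ℤ, ∑ i, n i • Multiplicative.toAdd (v i) = Multiplicative.toAdd x := by
  obtain ⟨w, rfl⟩ := hv x
  induction w using FreeGroup.induction_on with
  | C1 => exact ⟨0, by simp⟩
  | of i => exact ⟨Pi.single i 1, by simp [Pi.single_apply]⟩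
  | inv_of i ih =>
    obtain ⟨n, hn⟩ := ih
    rw [FreeGroup.lift_apply_of] at hn
    exact ⟨-n, by simp [hn, neg_smul]⟩
  | mul w w' ih ih' =>
    obtain ⟨n, hn⟩ := ih
    obtain ⟨n', hn'⟩ := ih'
    exact ⟨n + n', by simp [← hn, ← hn', add_smul, Finset.sum_add_distrib]⟩

open Multiplicative NielsenMove

variable {m r : ℕ}

def stdFamily (m r : ℕ) (i : Fin m) : Multiplicative (Fin r → ℤ) :=
  if h : (i : ℕ) < r then tbasis r ⟨i, h⟩ else 1

def IsStdUpTo (k : ℕ) (v : Fin m → Multiplicative (Fin r → ℤ)) : Prop :=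
  ∀ (i : Fin m) (j : Fin r), (j : ℕ) < k → toAdd (v i) j = if (i : ℕ) = j then 1 else 0

theorem IsStdUpTo.eq_stdFamily {v : Fin m → Multiplicative (Fin r → ℤ)} (hv : IsStdUpTo r v) :
    v = stdFamily m r := by
  funext i
  apply toAdd.injective
  funext j
  rw [hv i j j.isLt, stdFamily]
  split_ifs <;> simp_all [tbasis, Fin.ext_iff]

section
variable {k : ℕ} {v : Fin m → Multiplicative (Fin r → ℤ)}

theorem IsStdUpTo.toAdd_eq_zero (hv : IsStdUpTo k v) {i : Fin m} {j : Fin r} (hi : k ≤ i)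
    (hj : (j : ℕ) < k) : toAdd (v i) j = 0 := by
  rw [hv i j hj, if_neg (by omega)]

theorem IsStdUpTo.transvection (hv : IsStdUpTo k v) {i j : Fin m} (hij : i ≠ j) (hj : k ≤ j)
    (n : ℤ) : IsStdUpTo k ((transvection i j hij n).apply v) := by
  intro i' c hc
  by_cases h : i' = i
  · subst h; simp [hv i' c hc, hv.toAdd_eq_zero hj hc]
  · simp [h, hv i' c hc]

theorem IsStdUpTo.invert (hv : IsStdUpTo k v) {i : Fin m} (hi : k ≤ i) :
    IsStdUpTo k ((invert i).apply v) := by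
  intro i' c hc
  by_cases h : i' = i
  · subst h
    rw [invert_apply_self, toAdd_inv, Pi.neg_apply, hv.toAdd_eq_zero hi hc, neg_zero,
      if_neg (by omega)]
  · simp [h, hv i' c hc]

def columnWeight (k : ℕ) (c : Fin r) (v : Fin m → Multiplicative (Fin r → ℤ)) : ℕ :=
  ∑ i : Fin m, if k ≤ (i : ℕ) then (toAdd (v i) c).natAbs else 0

theorem columnWeight_transvection_lt {c : Fin r} {i i' : Fin m} (hne : i' ≠ i) (hi' : k ≤ i')
    (ha : toAdd (v i) c ≠ 0) (hle : (toAdd (v i) c).natAbs ≤ (toAdd (v i') c).natAbs) :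
    columnWeight k c ((transvection i' i hne (-(toAdd (v i') c / toAdd (v i) c))).apply v) <
      columnWeight k c v := by
  set q := toAdd (v i') c / toAdd (v i) c
  have hlt : (toAdd ((transvection i' i hne (-q)).apply v i') c).natAbs <
      (toAdd (v i') c).natAbs := by
    have hrem : toAdd ((transvection i' i hne (-q)).apply v i') c =
        toAdd (v i') c % toAdd (v i) c := by
      rw [transvection_apply_self, toAdd_mul, toAdd_zpow, Pi.add_apply, Pi.smul_apply,
        smul_eq_mul, Int.emod_def]
      ring
    have := Int.emod_lt (toAdd (v i') c) ha
    have := Int.emod_nonneg (toAdd (v i') c) ha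
    omega
  apply Finset.sum_lt_sum
  · intro x _
    by_cases hx : x = i'
    · subst hx
      split_ifs
      exact hlt.le
    · simp [hx]
  · exact ⟨i', Finset.mem_univ _, by simpa [hi'] using hlt⟩

theorem IsStdUpTo.exists_column_subsingleton {v : Fin m → Multiplicative (Fin r → ℤ)} (c : Fin r)
    (hv : IsStdUpTo k v) :
    ∃ w, NielsenEquivalent v w ∧ IsStdUpTo k w ∧
      ∀ i i' : Fin m, k ≤ (i : ℕ) → k ≤ (i' : ℕ) → toAdd (w i) c ≠ 0 → toAdd (w i') c ≠ 0 →
        i = i' := by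
  by_cases hsub : ∀ i i' : Fin m, k ≤ (i : ℕ) → k ≤ (i' : ℕ) → toAdd (v i) c ≠ 0 →
      toAdd (v i') c ≠ 0 → i = i'
  · exact ⟨v, .refl v, hv, hsub⟩
  push Not at hsub
  obtain ⟨i, i', hne, hi, hi', ha, hle⟩ : ∃ i i' : Fin m, i' ≠ i ∧ k ≤ (i : ℕ) ∧ k ≤ (i' : ℕ) ∧
      toAdd (v i) c ≠ 0 ∧ (toAdd (v i) c).natAbs ≤ (toAdd (v i') c).natAbs := by
    obtain ⟨i, i', hi, hi', ha, ha', hne⟩ := hsub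
    rcases le_total (toAdd (v i) c).natAbs (toAdd (v i') c).natAbs with hle | hle
    · exact ⟨i, i', hne.symm, hi, hi', ha, hle⟩
    · exact ⟨i', i, hne, hi', hi, ha', hle⟩
  have hdecreasing := columnWeight_transvection_lt hne hi' ha hle
  obtain ⟨w, hw, hstd, hsub⟩ :=
    (hv.transvection hne hi (-(toAdd (v i') c / toAdd (v i) c))).exists_column_subsingleton c
  exact ⟨w, .move_left _ hw, hstd, hsub⟩
termination_by columnWeight k c v

theorem IsStdUpTo.exists_isUnit (hv : IsStdUpTo k v) (hgen : Surjective (FreeGroup.lift v))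
    (hk : k < r) (hsub : ∀ i i' : Fin m, k ≤ (i : ℕ) → k ≤ (i' : ℕ) →
      toAdd (v i) ⟨k, hk⟩ ≠ 0 → toAdd (v i') ⟨k, hk⟩ ≠ 0 → i = i') :
    ∃ i₀ : Fin m, k ≤ (i₀ : ℕ) ∧ IsUnit (toAdd (v i₀) ⟨k, hk⟩) := by
  obtain ⟨n, hn⟩ := exists_sum_zsmul_eq_toAdd hgen (tbasis r ⟨k, hk⟩)
  have hcoord (j : Fin r) : ∑ i, n i * toAdd (v i) j = if j = ⟨k, hk⟩ then 1 else 0 := by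
    simpa [tbasis, Pi.single_apply, Finset.sum_apply] using congrFun hn j
  have hn₀ (i : Fin m) (hi : (i : ℕ) < k) : n i = 0 := by
    have := hcoord ⟨i, hi.trans hk⟩
    rw [Finset.sum_eq_single i] at this
    · simpa [hv i ⟨i, hi.trans hk⟩ hi, Fin.ext_iff, hi.ne] using this
    · intro i' _ hi'
      simp [hv i' ⟨i, hi.trans hk⟩ hi, Fin.val_ne_of_ne hi']
    · simp
  obtain ⟨i₀, hi₀, ha₀⟩ : ∃ i₀ : Fin m, k ≤ (i₀ : ℕ) ∧ toAdd (v i₀) ⟨k, hk⟩ ≠ 0 := by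
    by_contra! h
    have := hcoord ⟨k, hk⟩
    rw [if_pos rfl, Finset.sum_eq_zero] at this
    · exact zero_ne_one this
    · intro i _
      rcases lt_or_ge (i : ℕ) k with hi | hi
      · rw [hn₀ i hi, zero_mul]
      · rw [h i hi, mul_zero]
  refine ⟨i₀, hi₀, IsUnit.of_mul_eq_one_right (n i₀) ?_⟩
  have := hcoord ⟨k, hk⟩
  rwa [if_pos rfl, Finset.sum_eq_single i₀] at this
  · intro i _ hi
    rcases lt_or_ge (i : ℕ) k with hlt | hge
    · rw [hn₀ i hlt, zero_mul]
    · by_contra h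
      exact hi (hsub i i₀ hge hi₀ (right_ne_zero_of_mul h) ha₀)
  · simp

theorem IsStdUpTo.exists_pivot (hv : IsStdUpTo k v) (hgen : Surjective (FreeGroup.lift v))
    (hk : k < r) (hkm : k < m) :
    ∃ w, NielsenEquivalent v w ∧ IsStdUpTo k w ∧ toAdd (w ⟨k, hkm⟩) ⟨k, hk⟩ = 1 := by
  obtain ⟨w₁, hvw₁, hw₁, hsub⟩ := hv.exists_column_subsingleton ⟨k, hk⟩
  obtain ⟨i₀, hi₀, hunit⟩ := hw₁.exists_isUnit (hvw₁.surjective_lift hgen) hk hsub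
  obtain ⟨w₂, hvw₂, hw₂, h₂⟩ : ∃ w₂, NielsenEquivalent v w₂ ∧ IsStdUpTo k w₂ ∧
      toAdd (w₂ i₀) ⟨k, hk⟩ = 1 := by
    rcases Int.isUnit_iff.mp hunit with h | h
    · exact ⟨w₁, hvw₁, hw₁, h⟩
    · exact ⟨_, hvw₁.move (.invert i₀), hw₁.invert hi₀, by simp [h]⟩
  by_cases h : (⟨k, hkm⟩ : Fin m) = i₀
  · exact ⟨w₂, hvw₂, hw₂, h ▸ h₂⟩
  · exact ⟨_, hvw₂.move (.transvection _ i₀ h (1 - toAdd (w₂ ⟨k, hkm⟩) ⟨k, hk⟩)),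
      hw₂.transvection h hi₀ _, by simp [h₂]⟩

theorem IsStdUpTo.succ_of_pivot (hv : IsStdUpTo k v) (hk : k < r) (hkm : k < m)
    (hpiv : toAdd (v ⟨k, hkm⟩) ⟨k, hk⟩ = 1) :
    IsStdUpTo (k + 1) fun i =>
      v i * v ⟨k, hkm⟩ ^ (if i = ⟨k, hkm⟩ then 0 else -toAdd (v i) ⟨k, hk⟩) := by
  intro i j hj
  rcases Nat.lt_succ_iff_lt_or_eq.mp hj with hj | hj
  · have hpiv₀ := hv.toAdd_eq_zero (i := ⟨k, hkm⟩) le_rfl hj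
    rw [← hv i j hj]
    beta_reduce
    rw [toAdd_mul, toAdd_zpow, Pi.add_apply, Pi.smul_apply, hpiv₀, smul_zero, add_zero]
  · obtain rfl : j = ⟨k, hk⟩ := Fin.ext hj
    by_cases hi : i = ⟨k, hkm⟩
    · subst hi; simp [hpiv]
    · simp [hi, hpiv, Fin.val_ne_of_ne hi]

theorem IsStdUpTo.exists_succ (hv : IsStdUpTo k v) (hgen : Surjective (FreeGroup.lift v))
    (hk : k < r) (hkm : k < m) : ∃ w, NielsenEquivalent v w ∧ IsStdUpTo (k + 1) w := by
  obtain ⟨w, hvw, hw, hpiv⟩ := hv.exists_pivot hgen hk hkm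
  exact ⟨_, hvw.trans (.mul_zpow_pivot w _ _ (if_pos rfl)), hw.succ_of_pivot hk hkm hpiv⟩

end

theorem nielsenEquivalent_stdFamily (hr : r ≤ m) {v : Fin m → Multiplicative (Fin r → ℤ)}
    (hgen : Surjective (FreeGroup.lift v)) : NielsenEquivalent v (stdFamily m r) := by
  have hstep (k : ℕ) (hk : k ≤ r) : ∃ w, NielsenEquivalent v w ∧ IsStdUpTo k w := by
    induction k with
    | zero => exact ⟨v, .refl v, fun _ _ h => absurd h (Nat.not_lt_zero _)⟩
    | succ k ih =>
      obtain ⟨w, hvw, hw⟩ := ih (by omega)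
      obtain ⟨w', hww', hw'⟩ := hw.exists_succ (hvw.surjective_lift hgen) hk (by omega)
      exact ⟨w', hvw.trans hww', hw'⟩
  obtain ⟨w, hvw, hw⟩ := hstep r le_rfl
  rwa [hw.eq_stdFamily] at hvw

/-- Let `F` be a free group of rank `m` and `r ≤ m`.  If `φ : F → ℤ^r` is a surjective
homomorphism then there is a basis `e_1, …, e_m` of `F` with `φ(e_i) = t_i` for `i ≤ r`
and `φ(e_i) = 0` for `i > r`. -/
theorem free_basis_adapted_to_surjection_onto_free_abelian
    (m r : ℕ) (hr : r ≤ m) (F : Type) [Group F]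
    (b : Fin m → F) (hb : IsFreeBasis b)
    (φ : F →* Multiplicative (Fin r → ℤ)) (hφ : Function.Surjective φ) :
    ∃ e : Fin m → F, IsFreeBasis e ∧
      ∀ i : Fin m, φ (e i) =
        if h : (i : ℕ) < r then tbasis r ⟨i, h⟩ else 1 := by
  have hgen : Surjective (FreeGroup.lift (φ ∘ b)) := by
    rw [show FreeGroup.lift (φ ∘ b) = φ.comp (FreeGroup.lift b) from
      FreeGroup.ext_hom _ _ fun i => by simp]
    exact hφ.comp hb.surjective
  obtain ⟨e, hbe, he⟩ := (nielsenEquivalent_stdFamily hr hgen).exists_lift φ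
  exact ⟨e, hbe.isFreeBasis hb, congrFun he⟩
end

section
/- Let F be a free group of finite rank m and let Ab : F → F/[F,F] be the abelianisation homomorphism, so that A = F/[F,F] is a free abelian group of rank m. If s_1, …, s_m is any ℤ-basis of A, then there exists a basis f_1, …, f_m of the free group F such that Ab(f_i) = s_i for all i. -/
/-!
An automorphism of `F` induces an automorphism of `A`. In the coordinates given by the basis
`Ab(b_i)`, the Nielsen automorphisms `b_j ↦ b_j b_i ^ c` and `b_i ↦ b_i⁻¹` induce the
elementary matrices `1 + c E_ij` and `diag(1, …, -1, …, 1)`, and by the Euclidean algorithm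
these generate `GL_m(ℤ)`. Hence every automorphism of `A`, in particular the one sending
`Ab(b_i)` to `s_i`, is induced by an automorphism `φ` of `F`, and `f_i = φ(b_i)` is the
required basis.
-/

theorem Submonoid.mem_of_mul_mem_of_mul_eq_one {M : Type*} [Monoid M] {P : Submonoid M}
    {a b x : M} (hb : b ∈ P) (hba : b * a = 1) (h : a * x ∈ P) : x ∈ P := by
  simpa [← mul_assoc, hba] using P.mul_mem hb h

namespace Matrix

variable {n : Type*} [DecidableEq n]

theorem transvection_mul_apply [Fintype n] {R : Type*} [CommRing R] (i j : n) (c : R)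
    (M : Matrix n n R) (a b : n) :
    (transvection i j c * M) a b = M a b + if a = i then c * M j b else 0 := by
  rcases eq_or_ne a i with rfl | ha
  · rw [transvection_mul_apply_same, if_pos rfl]
  · rw [transvection_mul_apply_of_ne _ _ _ _ ha, if_neg ha, add_zero]

def EqOneOutsideCols {R : Type*} [Zero R] [One R] (S : Finset n) (M : Matrix n n R) : Prop :=
  ∀ i, ∀ j ∉ S, M i j = (1 : Matrix n n R) i j

namespace EqOneOutsideCols

variable {R : Type*} {S : Finset n}

theorem erase [Zero R] [One R] {M : Matrix n n R} (h : M.EqOneOutsideCols S) {k : n}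
    (hk : ∀ i, M i k = (1 : Matrix n n R) i k) : M.EqOneOutsideCols (S.erase k) := by
  intro i j hj
  rcases eq_or_ne j k with rfl | hjk
  · exact hk i
  · exact h i j fun hjS => hj (Finset.mem_erase.mpr ⟨hjk, hjS⟩)

variable [CommRing R] [Fintype n] {M : Matrix n n R}

theorem transvection_mul (h : M.EqOneOutsideCols S) {i j : n} (hj : j ∈ S) (c : R) :
    (transvection i j c * M).EqOneOutsideCols S := by
  intro a b hb
  rw [transvection_mul_apply, h a b hb, h j b hb, one_apply_ne (ne_of_mem_of_not_mem hj hb),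
    mul_zero, ite_self, add_zero]

theorem diagonal_mul (h : M.EqOneOutsideCols S) {d : n → R} (hd : ∀ a ∉ S, d a = 1) :
    (diagonal d * M).EqOneOutsideCols S := by
  intro a b hb
  rw [Matrix.diagonal_mul, h a b hb]
  by_cases ha : a ∈ S
  · rw [one_apply_ne (ne_of_mem_of_not_mem ha hb), mul_zero]
  · rw [hd a ha, one_mul]

/-- The coefficients `y` form row `k` of `M⁻¹`, which vanishes outside `S`. -/
theorem exists_sum_mul_eq_one (h : M.EqOneOutsideCols S) (hM : IsUnit M.det) {k : n}
    (hk : k ∈ S) : ∃ y : n → R, ∑ i ∈ S, y i * M i k = 1 := by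
  have hinv := nonsing_inv_mul M hM
  have hzero : ∀ j ∉ S, M⁻¹ k j = 0 := fun j hj => by
    have : (M⁻¹ * M) k j = (M⁻¹ * (1 : Matrix n n R)) k j := by
      simp only [mul_apply, h _ j hj]
    rwa [hinv, mul_one, one_apply_ne (ne_of_mem_of_not_mem hk hj), eq_comm] at this
  refine ⟨M⁻¹ k, ?_⟩
  calc ∑ i ∈ S, M⁻¹ k i * M i k = ∑ i, M⁻¹ k i * M i k :=
        Finset.sum_subset (Finset.subset_univ S) fun i _ hi => by rw [hzero i hi, zero_mul]
    _ = 1 := by rw [← mul_apply, hinv, one_apply_eq]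

end EqOneOutsideCols

variable [Fintype n]

variable (n) in
def elementarySubmonoid : Submonoid (Matrix n n ℤ) :=
  Submonoid.closure
    (Set.range TransvectionStruct.toMatrix ∪ Set.range fun i => diagonal (Pi.mulSingle i (-1)))

variable {M : Matrix n n ℤ} {S : Finset n} {k : n}

theorem isUnit_det_transvection_mul {i j : n} (hij : i ≠ j) {c : ℤ} :
    IsUnit (transvection i j c * M).det ↔ IsUnit M.det := by
  rw [det_mul, det_transvection_of_ne _ _ hij, one_mul]

theorem isUnit_det_diagonal_mulSingle_mul (i : n) :
    IsUnit (diagonal (Pi.mulSingle i (-1)) * M).det ↔ IsUnit M.det := by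
  simp [det_mul, det_diagonal]

theorem mem_elementarySubmonoid_of_transvection_mul {i j : n} (hij : i ≠ j) {c : ℤ}
    (h : transvection i j c * M ∈ elementarySubmonoid n) : M ∈ elementarySubmonoid n :=
  Submonoid.mem_of_mul_mem_of_mul_eq_one
    (Submonoid.subset_closure (Or.inl ⟨⟨i, j, hij, -c⟩, rfl⟩))
    (TransvectionStruct.inv_mul ⟨i, j, hij, c⟩) h

theorem mem_elementarySubmonoid_of_diagonal_mulSingle_mul (i : n)
    (h : diagonal (Pi.mulSingle i (-1)) * M ∈ elementarySubmonoid n) :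
    M ∈ elementarySubmonoid n :=
  Submonoid.mem_of_mul_mem_of_mul_eq_one (Submonoid.subset_closure (Or.inr ⟨i, rfl⟩))
    (by rw [diagonal_mul_diagonal, ← Pi.mul_def, ← Pi.mulSingle_mul]; simp) h

theorem mem_elementarySubmonoid_of_isUnit_pivot
    (hIH : ∀ M : Matrix n n ℤ, IsUnit M.det → M.EqOneOutsideCols (S.erase k) →
      M ∈ elementarySubmonoid n)
    (hk : k ∈ S) (hM : IsUnit M.det) (h : M.EqOneOutsideCols S) {p : n} (hp : p ∈ S)
    (hcol : ∀ i ≠ p, M i k = 0) (hpiv : IsUnit (M p k)) : M ∈ elementarySubmonoid n := by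
  rcases eq_or_ne p k with rfl | hpk
  · rcases Int.isUnit_iff.mp hpiv with hd | hd
    · refine hIH M hM (h.erase fun i => ?_)
      rcases eq_or_ne i p with rfl | hi
      · simp [hd]
      · simp [hcol i hi, one_apply_ne hi]
    · refine mem_elementarySubmonoid_of_diagonal_mulSingle_mul p (hIH _
        ((isUnit_det_diagonal_mulSingle_mul p).mpr hM) ((h.diagonal_mul fun a ha => ?_).erase
          fun i => ?_))
      · exact Pi.mulSingle_eq_of_ne (ne_of_mem_of_not_mem hp ha).symm _
      · rcases eq_or_ne i p with rfl | hi
        · simp [hd]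
        · simp [hcol i hi, one_apply_ne hi, Matrix.diagonal_mul]
  · -- add `M p k` times row `p` to row `k`, then clear row `p` using row `k`
    replace hpiv := Int.isUnit_mul_self hpiv
    refine mem_elementarySubmonoid_of_transvection_mul hpk.symm (c := M p k)
      (mem_elementarySubmonoid_of_transvection_mul hpk (c := -M p k) (hIH _ ?_
        (((h.transvection_mul hp _).transvection_mul hk _).erase fun i => ?_)))
    · rwa [isUnit_det_transvection_mul hpk, isUnit_det_transvection_mul hpk.symm]
    · simp only [transvection_mul_apply]
      rcases eq_or_ne i p with rfl | hi
      · simp only [if_true, if_neg hpk, hcol k hpk.symm, one_apply_ne hpk, zero_add]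
        linear_combination (-M i k) * hpiv
      · rcases eq_or_ne i k with rfl | hik
        · simpa [hi, hcol i hi] using hpiv
        · simp [hi, hik, hcol i hi, one_apply_ne hik]

/-- Euclid's algorithm on column `k`, decreasing `∑ i, |M i k|`. Only rows in `S` are added to
other rows, since they vanish on the columns outside `S`. -/
theorem mem_elementarySubmonoid_of_eqOneOutsideCols
    (hIH : ∀ M : Matrix n n ℤ, IsUnit M.det → M.EqOneOutsideCols (S.erase k) →
      M ∈ elementarySubmonoid n)
    (hk : k ∈ S) (hM : IsUnit M.det) (h : M.EqOneOutsideCols S) :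
    M ∈ elementarySubmonoid n := by
  induction hμ : ∑ i, (M i k).natAbs using Nat.strong_induction_on generalizing M with
  | _ μ IH =>
  by_cases hstep : ∃ a b, a ≠ b ∧ b ∈ S ∧ M a k ≠ 0 ∧ M b k ≠ 0 ∧
      (M b k).natAbs ≤ (M a k).natAbs
  · obtain ⟨a, b, hab, hb, ha0, hb0, hle⟩ := hstep
    have hdec : ((transvection a b (-(M a k / M b k)) * M) a k).natAbs < (M a k).natAbs := by
      have hrem : (transvection a b (-(M a k / M b k)) * M) a k = M a k % M b k := by
        rw [transvection_mul_apply_same, Int.emod_def]; ring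
      have := Int.emod_nonneg (M a k) hb0
      have := Int.emod_lt (M a k) hb0
      omega
    refine mem_elementarySubmonoid_of_transvection_mul hab (c := -(M a k / M b k))
      (IH _ ?_ ((isUnit_det_transvection_mul hab).mpr hM) (h.transvection_mul hb _) rfl)
    rw [← hμ]
    refine Finset.sum_lt_sum (fun i _ => ?_) ⟨a, Finset.mem_univ a, hdec⟩
    rcases eq_or_ne i a with rfl | hia
    · exact hdec.le
    · rw [transvection_mul_apply_of_ne _ _ _ _ hia]
  · -- column `k` has one nonzero entry in `S`, which is a unit, so none outside `S` either
    push Not at hstep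
    obtain ⟨y, hy⟩ := h.exists_sum_mul_eq_one hM hk
    obtain ⟨p, hp, hp0⟩ := Finset.exists_ne_zero_of_sum_ne_zero (hy ▸ one_ne_zero)
    have hpk : M p k ≠ 0 := right_ne_zero_of_mul hp0
    have hS : ∀ i ∈ S, i ≠ p → M i k = 0 := fun i hi hip => by
      by_contra hi0
      rcases le_total (M p k).natAbs (M i k).natAbs with hle | hle
      · exact (hstep i p hip hp hi0 hpk).not_ge hle
      · exact (hstep p i hip.symm hi hpk hi0).not_ge hle
    rw [Finset.sum_eq_single_of_mem p hp fun i hi hip => by rw [hS i hi hip, mul_zero]] at hy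
    have hpiv : IsUnit (M p k) := IsUnit.of_mul_eq_one_right _ hy
    refine mem_elementarySubmonoid_of_isUnit_pivot hIH hk hM h hp (fun i hip => ?_) hpiv
    by_contra hi0
    have := hstep i p hip hp hi0 hpk
    rw [Int.isUnit_iff_natAbs_eq.mp hpiv] at this
    omega

theorem mem_elementarySubmonoid_of_isUnit_det (hM : IsUnit M.det) :
    M ∈ elementarySubmonoid n := by
  suffices ∀ S : Finset n, ∀ M : Matrix n n ℤ, IsUnit M.det → M.EqOneOutsideCols S →
      M ∈ elementarySubmonoid n from
    this Finset.univ M hM fun _ j hj => absurd (Finset.mem_univ j) hj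
  intro S
  induction S using Finset.induction_on with
  | empty =>
    intro M _ h
    rw [show M = 1 from ext fun i j => h i j (Finset.notMem_empty j)]
    exact one_mem _
  | insert k S hk IH =>
    exact fun M => mem_elementarySubmonoid_of_eqOneOutsideCols (by rwa [Finset.erase_insert hk])
      (Finset.mem_insert_self k S)

end Matrix

def MulAut.abelianizationEnd (G : Type*) [Group G] :
    MulAut G →* Module.End ℤ (Additive (Abelianization G)) where
  toFun φ := (MonoidHom.toAdditive (Abelianization.map φ.toMonoidHom)).toIntLinearMap
  map_one' := by
    ext x
    obtain ⟨x⟩ := x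
    rfl
  map_mul' φ ψ := by
    ext x
    obtain ⟨x⟩ := x
    rfl

namespace FreeGroup

variable {ι : Type*} [DecidableEq ι]

theorem lift_update_mul_zpow_comp {i j : ι} (hij : i ≠ j) (c d : ℤ) :
    (lift (Function.update of j (of j * of i ^ c))).comp
        (lift (Function.update of j (of j * of i ^ d))) =
      lift (Function.update of j (of j * of i ^ (c + d))) := by
  ext k
  rcases eq_or_ne k j with rfl | hk
  · simp [Function.update_of_ne hij, zpow_add, mul_assoc]
  · simp [hk]

theorem lift_update_inv_comp_self (i : ι) :
    (lift (Function.update of i (of i)⁻¹)).comp (lift (Function.update of i (of i)⁻¹)) =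
      MonoidHom.id _ := by
  ext k
  rcases eq_or_ne k i with rfl | hk
  · simp
  · simp [hk]

def nielsenTransvection {i j : ι} (hij : i ≠ j) (c : ℤ) : MulAut (FreeGroup ι) :=
  (lift (Function.update of j (of j * of i ^ c))).toMulEquiv
    (lift (Function.update of j (of j * of i ^ (-c))))
    (by rw [lift_update_mul_zpow_comp hij, neg_add_cancel, zpow_zero, mul_one,
      Function.update_eq_self, lift_of_eq_id])
    (by rw [lift_update_mul_zpow_comp hij, add_neg_cancel, zpow_zero, mul_one,
      Function.update_eq_self, lift_of_eq_id])

def nielsenInv (i : ι) : MulAut (FreeGroup ι) :=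
  (lift (Function.update of i (of i)⁻¹)).toMulEquiv _ (lift_update_inv_comp_self i)
    (lift_update_inv_comp_self i)

variable (ι) in
noncomputable def abelianizationBasis :
    Module.Basis ι ℤ (Additive (Abelianization (FreeGroup ι))) :=
  FreeAbelianGroup.basis ι

omit [DecidableEq ι] in
@[simp] theorem abelianizationBasis_repr_ofMul_of (i : ι) :
    (abelianizationBasis ι).repr (Additive.ofMul (Abelianization.of (of i))) =
      Finsupp.single i 1 :=
  FreeAbelianGroup.toFinsupp_of i

omit [DecidableEq ι] in
theorem abelianizationBasis_apply (i : ι) :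
    abelianizationBasis ι i = Additive.ofMul (Abelianization.of (of i)) :=
  (abelianizationBasis ι).repr.injective <| by
    rw [Module.Basis.repr_self, abelianizationBasis_repr_ofMul_of]

variable [Fintype ι]

noncomputable def abelianizationMatrix : MulAut (FreeGroup ι) →* Matrix ι ι ℤ :=
  (LinearMap.toMatrixAlgEquiv (abelianizationBasis ι) : _ →* Matrix ι ι ℤ).comp
    (MulAut.abelianizationEnd (FreeGroup ι))

theorem abelianizationMatrix_apply (φ : MulAut (FreeGroup ι)) (i j : ι) :
    abelianizationMatrix φ i j =
      (abelianizationBasis ι).repr (Additive.ofMul (Abelianization.of (φ (of j)))) i := by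
  rw [abelianizationMatrix, MonoidHom.comp_apply, MonoidHom.coe_coe,
    LinearMap.toMatrixAlgEquiv_apply, abelianizationBasis_apply]
  rfl

theorem abelianizationMatrix_nielsenTransvection {i j : ι} (hij : i ≠ j) (c : ℤ) :
    abelianizationMatrix (nielsenTransvection hij c) = Matrix.transvection i j c := by
  ext a b
  rw [abelianizationMatrix_apply]
  rcases eq_or_ne b j with rfl | hb
  · simp [nielsenTransvection, Matrix.transvection, Matrix.one_apply, Matrix.single_apply,
      Finsupp.single_apply, ofMul_zpow]
    grind
  · simp [nielsenTransvection, Matrix.transvection, Matrix.one_apply, Matrix.single_apply,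
      Finsupp.single_apply, hb]
    grind

theorem abelianizationMatrix_nielsenInv (i : ι) :
    abelianizationMatrix (nielsenInv i) = Matrix.diagonal (Pi.mulSingle i (-1)) := by
  ext a b
  rw [abelianizationMatrix_apply]
  rcases eq_or_ne b i with rfl | hb
  · simp [nielsenInv, Matrix.diagonal_apply, Finsupp.single_apply, Pi.mulSingle_apply]
    grind
  · simp [nielsenInv, Matrix.diagonal_apply, Finsupp.single_apply, Pi.mulSingle_apply, hb]
    grind

theorem exists_abelianizationMatrix_eq {M : Matrix ι ι ℤ} (hM : IsUnit M.det) :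
    ∃ φ, abelianizationMatrix φ = M := by
  refine MonoidHom.mem_mrange.mp <|
    (Submonoid.closure_le (S := MonoidHom.mrange (abelianizationMatrix (ι := ι)))).mpr
      (Set.union_subset ?_ ?_) (Matrix.mem_elementarySubmonoid_of_isUnit_det hM)
  · rintro _ ⟨t, rfl⟩
    exact ⟨nielsenTransvection t.hij t.c, abelianizationMatrix_nielsenTransvection t.hij t.c⟩
  · rintro _ ⟨i, rfl⟩
    exact ⟨nielsenInv i, abelianizationMatrix_nielsenInv i⟩

theorem exists_mulAut_lifting_basis
    (s : Module.Basis ι ℤ (Additive (Abelianization (FreeGroup ι)))) :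
    ∃ φ : MulAut (FreeGroup ι),
      ∀ j, Additive.ofMul (Abelianization.of (φ (of j))) = s j := by
  obtain ⟨φ, hφ⟩ := exists_abelianizationMatrix_eq
    ((abelianizationBasis ι).det_apply s ▸ (abelianizationBasis ι).isUnit_det s)
  refine ⟨φ, fun j => (abelianizationBasis ι).repr.injective (Finsupp.ext fun i => ?_)⟩
  simpa [abelianizationMatrix_apply, Module.Basis.toMatrix_apply] using congrFun (congrFun hφ i) j

end FreeGroup

theorem isFreeBasis_of_mulEquiv {m : ℕ} {F : Type} [Group F] (e : FreeGroup (Fin m) ≃* F) :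
    IsFreeBasis fun i => e (FreeGroup.of i) := by
  rw [IsFreeBasis, show FreeGroup.lift (fun i => e (FreeGroup.of i)) = e.toMonoidHom from
    FreeGroup.ext_hom _ _ fun i => by simp]
  exact e.bijective

/-- Let `F` be a free group of rank `m` and let `Ab : F → F/[F,F]` be the abelianisation map,
so that `A = F/[F,F]` is free abelian of rank `m`.  Any `ℤ`-basis `s_1, …, s_m` of `A`
lifts under `Ab` to a basis `f_1, …, f_m` of the free group `F`. -/
theorem basis_of_abelianization_lifts
    (m : ℕ) (F : Type) [Group F]
    (b : Fin m → F) (hb : IsFreeBasis b)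
    (s : Module.Basis (Fin m) ℤ (Additive (Abelianization F))) :
    ∃ f : Fin m → F, IsFreeBasis f ∧
      ∀ i : Fin m, Additive.ofMul (Abelianization.of (f i)) = s i := by
  let ψ : FreeGroup (Fin m) ≃* F := MulEquiv.ofBijective (FreeGroup.lift b) hb
  let ψab :
      Additive (Abelianization (FreeGroup (Fin m))) ≃ₗ[ℤ] Additive (Abelianization F) :=
    (MulEquiv.toAdditive ψ.abelianizationCongr).toIntLinearEquiv
  obtain ⟨φ, hφ⟩ := FreeGroup.exists_mulAut_lifting_basis (s.map ψab.symm)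
  refine ⟨fun i => (φ.trans ψ) (FreeGroup.of i), isFreeBasis_of_mulEquiv _, fun i => ?_⟩
  calc Additive.ofMul (Abelianization.of (ψ (φ (FreeGroup.of i))))
      = ψab (Additive.ofMul (Abelianization.of (φ (FreeGroup.of i)))) := rfl
    _ = s i := by rw [hφ i, Module.Basis.map_apply, LinearEquiv.apply_symm_apply]
end

section
/- Let n, m ≥ 1 and r ≤ m, and let F^(1), …, F^(n) be free groups of rank m. If θ and θ' are two group homomorphisms from the direct product F^(1) × … × F^(n) to the free abelian group ℤ^r each of whose restrictions to every factor F^(i) is surjective, then there is an automorphism of F^(1) × … × F^(n) which preserves each direct factor (i.e., is a product of automorphisms of the individual factors) and which carries ker θ onto ker θ'. In particular ker θ and ker θ' are isomorphic groups. -/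
/-!
Precomposing a homomorphism `F(ι) → ℤ^r`, given by the images `v : ι → ℤ^r` of the free
generators, with the Nielsen automorphisms `x_p ↦ x_p x_q ^ c` and `x_p ↦ x_p⁻¹` performs the
elementary row operations `v_p ↦ v_p + c • v_q` and `v_p ↦ -v_p`. A family generating `ℤ^r` is
brought by such operations to the standard family `(e_1, …, e_r, 0, …, 0)`: Euclid's algorithm
produces a pivot `1` in the first column, which clears that column, and induction on `r` handles
the remaining columns. Hence any two surjections `F_m → ℤ^r` differ by an automorphism of `F_m`.
Doing this on every factor gives a factor-preserving automorphism `σ` with `θ' ∘ σ = θ`, which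
carries `ker θ` onto `ker θ'`.
-/

open Function Multiplicative Relation

namespace FreeGroup

variable {ι G : Type*} [DecidableEq ι] [Group G]

lemma lift_comp_lift_update_of (f : ι → G) (p : ι) (x : FreeGroup ι) :
    (lift f).comp (lift (update of p x)) = lift (update f p (lift f x)) := by
  ext i
  rcases eq_or_ne i p with rfl | hi <;> simp [*]

def transvectionHom (p q : ι) (c : ℤ) : FreeGroup ι →* FreeGroup ι :=
  lift (update of p (of p * of q ^ c))

def invertGeneratorHom (p : ι) : FreeGroup ι →* FreeGroup ι :=
  lift (update of p (of p)⁻¹)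

lemma lift_comp_transvectionHom (f : ι → G) (p q : ι) (c : ℤ) :
    (lift f).comp (transvectionHom p q c) = lift (update f p (f p * f q ^ c)) := by
  simp [transvectionHom, lift_comp_lift_update_of]

lemma lift_comp_invertGeneratorHom (f : ι → G) (p : ι) :
    (lift f).comp (invertGeneratorHom p) = lift (update f p (f p)⁻¹) := by
  simp [invertGeneratorHom, lift_comp_lift_update_of]

lemma transvectionHom_comp_neg {p q : ι} (hpq : p ≠ q) (c : ℤ) :
    (transvectionHom p q c).comp (transvectionHom p q (-c)) = MonoidHom.id _ := by
  rw [transvectionHom, lift_comp_transvectionHom]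
  simp [update_of_ne hpq.symm, zpow_neg, lift_of_eq_id]

def transvection {p q : ι} (hpq : p ≠ q) (c : ℤ) : FreeGroup ι ≃* FreeGroup ι :=
  (transvectionHom p q c).toMulEquiv (transvectionHom p q (-c))
    (by simpa using transvectionHom_comp_neg hpq (-c)) (transvectionHom_comp_neg hpq c)

lemma invertGeneratorHom_comp_self (p : ι) :
    (invertGeneratorHom p).comp (invertGeneratorHom p) = MonoidHom.id _ := by
  simp [invertGeneratorHom, lift_comp_lift_update_of, lift_of_eq_id]

def invertGenerator (p : ι) : FreeGroup ι ≃* FreeGroup ι :=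
  (invertGeneratorHom p).toMulEquiv (invertGeneratorHom p) (invertGeneratorHom_comp_self p)
    (invertGeneratorHom_comp_self p)

end FreeGroup

open Submodule Set

section ElementaryMove

variable {ι M N : Type*} [DecidableEq ι] [AddCommGroup M] [AddCommGroup N]

inductive ElementaryMove : (ι → M) → (ι → M) → Prop
  | addSMul (v : ι → M) {p q : ι} (hpq : p ≠ q) (c : ℤ) :
      ElementaryMove v (update v p (v p + c • v q))
  | neg (v : ι → M) (p : ι) : ElementaryMove v (update v p (-v p))

namespace ElementaryMove

lemma exists_mulEquiv {v w : ι → M} (h : ElementaryMove v w) :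
    ∃ α : FreeGroup ι ≃* FreeGroup ι,
      (FreeGroup.lift (ofAdd ∘ v)).comp α.toMonoidHom = FreeGroup.lift (ofAdd ∘ w) := by
  cases h with
  | addSMul hpq c =>
    refine ⟨FreeGroup.transvection hpq c, (FreeGroup.lift_comp_transvectionHom _ _ _ _).trans ?_⟩
    simp [comp_update, ofAdd_add, ofAdd_zsmul]
  | neg p =>
    refine ⟨FreeGroup.invertGenerator p, (FreeGroup.lift_comp_invertGeneratorHom _ _).trans ?_⟩
    simp [comp_update, ofAdd_neg]

lemma span_range_le {v w : ι → M} (h : ElementaryMove v w) :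
    span ℤ (range v) ≤ span ℤ (range w) := by
  refine span_le.2 (range_subset_iff.2 fun i => ?_)
  have mem : ∀ j, w j ∈ span ℤ (range w) := fun j => subset_span (mem_range_self j)
  cases h with
  | @addSMul p q hpq c =>
    rcases eq_or_ne i p with rfl | hi
    · convert sub_mem (mem i) (smul_mem _ c (mem q)) using 1
      simp [update_of_ne hpq.symm]
    · simpa [update_of_ne hi] using mem i
  | neg p =>
    rcases eq_or_ne i p with rfl | hi
    · simpa using neg_mem (mem i)
    · simpa [update_of_ne hi] using mem i

lemma cons_map {m : ℕ} (a : N) (φ : M →+ N) {u u' : Fin m → M} (h : ElementaryMove u u') :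
    ElementaryMove (Fin.cons a (φ ∘ u) : Fin (m + 1) → N) (Fin.cons a (φ ∘ u')) := by
  cases h with
  | addSMul hpq c =>
    convert addSMul (Fin.cons a (φ ∘ u) : Fin (m + 1) → N) ((Fin.succ_injective _).ne hpq) c
    simp [Fin.cons_update, comp_update]
  | neg p =>
    convert neg (Fin.cons a (φ ∘ u) : Fin (m + 1) → N) p.succ
    simp [Fin.cons_update, comp_update]

end ElementaryMove

lemma exists_mulEquiv_of_reflTransGen {v w : ι → M} (h : ReflTransGen ElementaryMove v w) :
    ∃ α : FreeGroup ι ≃* FreeGroup ι,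
      (FreeGroup.lift (ofAdd ∘ v)).comp α.toMonoidHom = FreeGroup.lift (ofAdd ∘ w) := by
  induction h with
  | refl => exact ⟨MulEquiv.refl _, by ext; simp⟩
  | tail _ hmove ih =>
    obtain ⟨α, hα⟩ := ih
    obtain ⟨β, hβ⟩ := hmove.exists_mulEquiv
    exact ⟨β.trans α, by rw [← hβ, ← hα]; rfl⟩

lemma span_range_eq_top_of_reflTransGen {v w : ι → M} (h : ReflTransGen ElementaryMove v w)
    (hv : span ℤ (range v) = ⊤) : span ℤ (range w) = ⊤ := by
  induction h with
  | refl => exact hv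
  | tail _ hmove ih => exact top_unique (ih ▸ hmove.span_range_le)

lemma reflTransGen_cons_map {m : ℕ} (a : N) (φ : M →+ N) {u u' : Fin m → M}
    (h : ReflTransGen ElementaryMove u u') :
    ReflTransGen ElementaryMove (Fin.cons a (φ ∘ u) : Fin (m + 1) → N) (Fin.cons a (φ ∘ u')) :=
  ReflTransGen.lift (fun u : Fin m → M => (Fin.cons a (φ ∘ u) : Fin (m + 1) → N))
    (fun _ _ hmove => hmove.cons_map a φ) _ _ h

lemma reflTransGen_cons_add_sum {m : ℕ} (a : M) (u : Fin m → M) (c : Fin m → ℤ) :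
    ReflTransGen ElementaryMove (Fin.cons a u : Fin (m + 1) → M)
      (Fin.cons (a + ∑ i, c i • u i) u) := by
  suffices ∀ s : Finset (Fin m), ReflTransGen ElementaryMove (Fin.cons a u : Fin (m + 1) → M)
      (Fin.cons (a + ∑ i ∈ s, c i • u i) u) from this _
  intro s
  induction s using Finset.induction_on with
  | empty => simpa using ReflTransGen.refl
  | insert j s hj ih =>
    convert ih.tail (.addSMul _ (Fin.succ_ne_zero j).symm (c j)) using 1
    simp [Fin.update_cons_zero, Finset.sum_insert hj, add_comm, add_left_comm]

variable [Fintype ι]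

lemma reflTransGen_add_smul_pivot (v : ι → M) (p : ι) (c : ι → ℤ) :
    ReflTransGen ElementaryMove v (fun i => if i = p then v p else v i + c i • v p) := by
  suffices ∀ s : Finset ι, p ∉ s →
      ReflTransGen ElementaryMove v (fun i => if i ∈ s then v i + c i • v p else v i) by
    convert this _ (Finset.notMem_erase p Finset.univ) using 2 with i
    by_cases hi : i = p <;> simp [hi]
  intro s
  induction s using Finset.induction_on with
  | empty => simpa using ReflTransGen.refl
  | insert j s hj ih =>
    intro hp
    rw [Finset.mem_insert, not_or] at hp
    convert (ih hp.2).tail (.addSMul _ (Ne.symm hp.1) (c j)) using 1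
    ext i : 1
    rcases eq_or_ne i j with rfl | hi
    · simp [hj, hp.2]
    · simp [hi]

end ElementaryMove

section Reduction

variable {ι ρ : Type*} [Fintype ι] [DecidableEq ρ]

lemma isUnit_of_forall_dvd {v : ι → ρ → ℤ} (hv : span ℤ (range v) = ⊤)
    (k : ρ) {d : ℤ} (hd : ∀ i, d ∣ v i k) : IsUnit d := by
  obtain ⟨c, hc⟩ := (mem_span_range_iff_exists_fun ℤ).1 (hv ▸ mem_top : Pi.single k 1 ∈ _)
  have hsum : ∑ i, c i * v i k = 1 := by simpa using congr_fun hc k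
  exact isUnit_of_dvd_one (hsum ▸ Finset.dvd_sum fun i _ => (hd i).mul_left _)

variable [DecidableEq ι]

lemma exists_reflTransGen_isUnit (k : ρ) {v : ι → ρ → ℤ} (hv : span ℤ (range v) = ⊤) :
    ∃ w i, ReflTransGen ElementaryMove v w ∧ IsUnit (w i k) := by
  obtain ⟨q, hq⟩ : ∃ q, v q k ≠ 0 := by
    by_contra! h
    exact not_isUnit_zero (isUnit_of_forall_dvd hv k fun i => by simp [h i])
  induction hn : (v q k).natAbs using Nat.strong_induction_on generalizing v q with
  | _ n ih =>
  -- Reduce column `k` modulo `v q k`: either a nonzero remainder of smaller absolute value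
  -- appears, or `v q k` divides the whole column and is therefore a unit.
  set u : ι → ρ → ℤ := fun i => if i = q then v q else v i + (-(v i k / v q k)) • v q
  have hvu : ReflTransGen ElementaryMove v u := reflTransGen_add_smul_pivot v q _
  have hu := span_range_eq_top_of_reflTransGen hvu hv
  by_cases h : ∃ i ≠ q, u i k ≠ 0
  · obtain ⟨i, hiq, hi⟩ := h
    have hlt : (u i k).natAbs < n := by
      have hmod : u i k = v i k % v q k := by simp [u, hiq, Int.emod_def]; ring
      have h1 := Int.emod_nonneg (v i k) hq
      have h2 := Int.emod_lt_abs (v i k) hq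
      rw [Int.abs_eq_natAbs] at h2
      omega
    obtain ⟨w, j, huw, hw⟩ := ih _ hlt hu i hi rfl
    exact ⟨w, j, hvu.trans huw, hw⟩
  · push Not at h
    refine ⟨u, q, hvu, isUnit_of_forall_dvd hu k fun i => ?_⟩
    rcases eq_or_ne i q with rfl | hiq
    · exact dvd_rfl
    · simp [h i hiq]

lemma exists_reflTransGen_eq_one (k : ρ) (p : ι) {v : ι → ρ → ℤ}
    (hv : span ℤ (range v) = ⊤) :
    ∃ w, ReflTransGen ElementaryMove v w ∧ w p k = 1 := by
  obtain ⟨w, i, hvw, hi⟩ := exists_reflTransGen_isUnit k hv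
  rcases eq_or_ne p i with rfl | hpi
  · rcases Int.isUnit_iff.1 hi with h | h
    · exact ⟨w, hvw, h⟩
    · exact ⟨_, hvw.tail (.neg w p), by simp [h]⟩
  · refine ⟨_, hvw.tail (.addSMul w hpi ((1 - w p k) * w i k)), ?_⟩
    simp only [update_self, Pi.add_apply, Pi.smul_apply, smul_eq_mul]
    linear_combination (1 - w p k) * Int.isUnit_mul_self hi

lemma exists_reflTransGen_pivot (k : ρ) (p : ι) {v : ι → ρ → ℤ}
    (hv : span ℤ (range v) = ⊤) :
    ∃ w, ReflTransGen ElementaryMove v w ∧ w p k = 1 ∧ ∀ i ≠ p, w i k = 0 := by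
  obtain ⟨w, hvw, hw⟩ := exists_reflTransGen_eq_one k p hv
  exact ⟨_, hvw.trans (reflTransGen_add_smul_pivot w p fun i => -w i k), by simp [hw],
    fun i hi => by simp [hi, hw]⟩

end Reduction

def consZero {A : Type*} [AddZeroClass A] (r : ℕ) : (Fin r → A) →+ (Fin (r + 1) → A) where
  toFun y := Fin.cons 0 y
  map_zero' := by ext k; cases k using Fin.cases <;> simp
  map_add' x y := by ext k; cases k using Fin.cases <;> simp

@[simp]
lemma consZero_apply {A : Type*} [AddZeroClass A] {r : ℕ} (y : Fin r → A) :
    consZero r y = Fin.cons 0 y :=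
  rfl

def stdTuple (m r : ℕ) : Fin m → Fin r → ℤ := fun i k => if (i : ℕ) = k then 1 else 0

lemma stdTuple_succ_succ (m r : ℕ) :
    stdTuple (m + 1) (r + 1) = Fin.cons (Pi.single 0 1) (consZero r ∘ stdTuple m r) := by
  ext i k
  cases i using Fin.cases <;> cases k using Fin.cases <;> simp [stdTuple]

lemma span_range_eq_top_of_cons {m r : ℕ} {a : Fin (r + 1) → ℤ} (ha : a 0 = 1)
    {u : Fin m → Fin r → ℤ}
    (h : span ℤ (range (Fin.cons a (consZero r ∘ u) : Fin (m + 1) → Fin (r + 1) → ℤ)) = ⊤) :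
    span ℤ (range u) = ⊤ := by
  refine eq_top_iff.2 fun y _ => ?_
  obtain ⟨c, hc⟩ := (mem_span_range_iff_exists_fun ℤ).1 (h ▸ mem_top : consZero r y ∈ _)
  rw [Fin.sum_univ_succ] at hc
  have hc0 : c 0 = 0 := by simpa [ha] using congr_fun hc 0
  refine (mem_span_range_iff_exists_fun ℤ).2 ⟨fun i => c i.succ, funext fun k => ?_⟩
  simpa [hc0] using congr_fun hc k.succ

lemma reflTransGen_cons_pi_single {m r : ℕ} {a : Fin (r + 1) → ℤ} (ha : a 0 = 1)
    {u : Fin m → Fin r → ℤ} (hu : span ℤ (range u) = ⊤) :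
    ReflTransGen ElementaryMove (Fin.cons a (consZero r ∘ u) : Fin (m + 1) → Fin (r + 1) → ℤ)
      (Fin.cons (Pi.single 0 1) (consZero r ∘ u)) := by
  obtain ⟨c, hc⟩ := (mem_span_range_iff_exists_fun ℤ).1 (hu ▸ mem_top : -Fin.tail a ∈ _)
  convert reflTransGen_cons_add_sum a (consZero r ∘ u) c using 2
  ext k
  cases k using Fin.cases
  · simp [ha]
  · have := congr_fun hc ‹_›
    simp_all [Finset.sum_apply, Fin.tail]

theorem reflTransGen_stdTuple :
    ∀ {r m : ℕ} {v : Fin m → Fin r → ℤ}, span ℤ (range v) = ⊤ →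
      ReflTransGen ElementaryMove v (stdTuple m r)
  | 0, m, v, _ => Subsingleton.elim v (stdTuple m 0) ▸ .refl
  | r + 1, 0, v, hv => absurd hv (by simp [range_eq_empty])
  | r + 1, m + 1, v, hv => by
    obtain ⟨w, hvw, hw0, hw⟩ := exists_reflTransGen_pivot 0 0 hv
    have hcons : w = Fin.cons (w 0) (consZero r ∘ fun i => Fin.tail (w i.succ)) := by
      ext i k
      cases i using Fin.cases
      · rfl
      · cases k using Fin.cases
        · simp [hw _ (Fin.succ_ne_zero _)]
        · simp [Fin.tail]
    rw [hcons] at hvw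
    have hu := span_range_eq_top_of_cons hw0 (span_range_eq_top_of_reflTransGen hvw hv)
    rw [stdTuple_succ_succ]
    exact hvw.trans ((reflTransGen_cons_pi_single hw0 hu).trans
      (reflTransGen_cons_map _ _ (reflTransGen_stdTuple hu)))

lemma span_range_eq_top_of_surjective {ι M : Type*} [AddCommGroup M] {v : ι → M}
    (h : Surjective (FreeGroup.lift (ofAdd ∘ v))) : span ℤ (range v) = ⊤ := by
  have hmem (g : FreeGroup ι) : toAdd (FreeGroup.lift (ofAdd ∘ v) g) ∈ span ℤ (range v) := by
    induction g using FreeGroup.induction_on with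
    | C1 => simp
    | of i => simpa using subset_span (mem_range_self i)
    | inv_of i hi => simpa using hi
    | mul g g' hg hg' => simpa using add_mem hg hg'
  refine eq_top_iff.2 fun y _ => ?_
  obtain ⟨g, hg⟩ := h (ofAdd y)
  simpa [hg] using hmem g

theorem FreeGroup.exists_mulEquiv_comp_eq_of_surjective {m r : ℕ}
    {ψ ψ' : FreeGroup (Fin m) →* Multiplicative (Fin r → ℤ)}
    (hψ : Surjective ψ) (hψ' : Surjective ψ') :
    ∃ α : FreeGroup (Fin m) ≃* FreeGroup (Fin m), ψ'.comp α.toMonoidHom = ψ := by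
  have reduce : ∀ {χ : FreeGroup (Fin m) →* Multiplicative (Fin r → ℤ)}, Surjective χ →
      ∃ α : FreeGroup (Fin m) ≃* FreeGroup (Fin m),
        χ.comp α.toMonoidHom = lift (ofAdd ∘ stdTuple m r) := by
    intro χ hχ
    rw [← lift.apply_symm_apply χ] at hχ ⊢
    exact exists_mulEquiv_of_reflTransGen
      (reflTransGen_stdTuple (v := toAdd ∘ lift.symm χ) (span_range_eq_top_of_surjective hχ))
  obtain ⟨α, hα⟩ := reduce hψ
  obtain ⟨α', hα'⟩ := reduce hψ'
  refine ⟨α.symm.trans α', MonoidHom.ext fun x => ?_⟩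
  simpa using (DFunLike.congr_fun hα' (α.symm x)).trans (DFunLike.congr_fun hα (α.symm x)).symm

lemma MonoidHom.comp_piCongrRight_eq {η : Type*} [Fintype η] [DecidableEq η]
    {G : η → Type*} [∀ i, Group (G i)] {H : Type*} [Monoid H] {θ θ' : (∀ i, G i) →* H}
    {σ : ∀ i, G i ≃* G i}
    (hσ : ∀ i, (θ'.comp (MonoidHom.mulSingle G i)).comp (σ i).toMonoidHom =
      θ.comp (MonoidHom.mulSingle G i)) :
    θ'.comp (MulEquiv.piCongrRight σ).toMonoidHom = θ := by
  refine MonoidHom.pi_ext fun i x => ?_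
  have hsingle : MulEquiv.piCongrRight σ (Pi.mulSingle i x) = Pi.mulSingle i (σ i x) :=
    funext (Pi.apply_mulSingle (fun i => σ i) (fun i => map_one _) i x)
  simpa [hsingle] using DFunLike.congr_fun (hσ i) x

lemma Subgroup.map_ker_of_comp_eq {G G' H : Type*} [Group G] [Group G'] [Monoid H]
    {θ : G →* H} {θ' : G' →* H} {e : G ≃* G'} (h : θ'.comp e.toMonoidHom = θ) :
    θ.ker.map e.toMonoidHom = θ'.ker := by
  rw [← h, ← MonoidHom.comap_ker, map_comap_eq_self_of_surjective e.surjective]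

theorem kernels_isomorphic_of_factorwise_surjective_general
    (n m r : ℕ)
    (θ θ' : (∀ _ : Fin n, FreeGroup (Fin m)) →* Multiplicative (Fin r → ℤ))
    (hθ : ∀ i : Fin n, Function.Surjective
      (θ.comp (MonoidHom.mulSingle (fun _ : Fin n => FreeGroup (Fin m)) i)))
    (hθ' : ∀ i : Fin n, Function.Surjective
      (θ'.comp (MonoidHom.mulSingle (fun _ : Fin n => FreeGroup (Fin m)) i))) :
    ∃ σ : Fin n → (FreeGroup (Fin m) ≃* FreeGroup (Fin m)),
      Subgroup.map (MulEquiv.piCongrRight σ).toMonoidHom θ.ker = θ'.ker ∧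
      Nonempty (θ.ker ≃* θ'.ker) := by
  choose σ hσ using fun i => FreeGroup.exists_mulEquiv_comp_eq_of_surjective (hθ i) (hθ' i)
  have hker := Subgroup.map_ker_of_comp_eq (MonoidHom.comp_piCongrRight_eq hσ)
  exact ⟨σ, hker,
    ⟨(MulEquiv.subgroupMap (MulEquiv.piCongrRight σ) θ.ker).trans (MulEquiv.subgroupCongr hker)⟩⟩

/-- Let `F^(1), …, F^(n)` be free groups of rank `m ≥ 1`, let `r ≤ m`, and let
`θ, θ' : F^(1) × ⋯ × F^(n) → ℤ^r` be homomorphisms whose restrictions to every factor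
are surjective.  Then there is an automorphism of the product preserving each factor
(i.e. a product of automorphisms of the individual factors) carrying `ker θ` onto `ker θ'`;
in particular `ker θ ≅ ker θ'`. -/
theorem kernels_isomorphic_of_factorwise_surjective
    (n m r : ℕ) (hn : 1 ≤ n) (hm : 1 ≤ m) (hr : r ≤ m)
    (θ θ' : (∀ _ : Fin n, FreeGroup (Fin m)) →* Multiplicative (Fin r → ℤ))
    (hθ : ∀ i : Fin n, Function.Surjective
      (θ.comp (MonoidHom.mulSingle (fun _ : Fin n => FreeGroup (Fin m)) i)))
    (hθ' : ∀ i : Fin n, Function.Surjective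
      (θ'.comp (MonoidHom.mulSingle (fun _ : Fin n => FreeGroup (Fin m)) i))) :
    ∃ σ : Fin n → (FreeGroup (Fin m) ≃* FreeGroup (Fin m)),
      Subgroup.map (MulEquiv.piCongrRight σ).toMonoidHom θ.ker = θ'.ker ∧
      Nonempty (θ.ker ≃* θ'.ker) :=
  kernels_isomorphic_of_factorwise_surjective_general n m r θ θ' hθ hθ'
end

section
/- Let n ≥ 2, m ≥ 1 and r ≤ m. Then the group K^n_m(r) is generated by the set S_1 ∪ S_2 ∪ S_3, where S_1 = { e^(1)_i (e^(j)_i)^{-1} : 1 ≤ i ≤ r, 2 ≤ j ≤ n }, S_2 = { e^(j)_i : r+1 ≤ i ≤ m, 1 ≤ j ≤ n }, and S_3 = { [e^(1)_i, e^(1)_j] : 1 ≤ i < j ≤ r }. (Here [x,y] denotes xyx^{-1}y^{-1}.) -/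
/-- The element `t_j` of `ℤ^r` (written multiplicatively), where indices `j ≥ r` map to `0`. -/
def tvec (m r : ℕ) (j : Fin m) : Multiplicative (Fin r → ℤ) :=
  Multiplicative.ofAdd (if h : (j : ℕ) < r then Pi.single (⟨j, h⟩ : Fin r) (1 : ℤ) else 0)

/-- The homomorphism `F_m → ℤ^r` sending `e_j ↦ t_j` for `j ≤ r` and `e_j ↦ 0` for `j > r`. -/
def facHom (m r : ℕ) : FreeGroup (Fin m) →* Multiplicative (Fin r → ℤ) :=
  FreeGroup.lift (tvec m r)

/-- The homomorphism `θ : F_m^(1) × ⋯ × F_m^(n) → ℤ^r` with `θ(e^(i)_j) = t_j` for `j ≤ r`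
and `θ(e^(i)_j) = 0` for `j > r`. -/
def thetaHom (n m r : ℕ) : (∀ _ : Fin n, FreeGroup (Fin m)) →* Multiplicative (Fin r → ℤ) where
  toFun g := ∏ i, facHom m r (g i)
  map_one' := by simp
  map_mul' a b := by simp [Finset.prod_mul_distrib]

/-- The group `K^n_m(r) = ker θ`. -/
def Kgrp (n m r : ℕ) : Subgroup (∀ _ : Fin n, FreeGroup (Fin m)) := (thetaHom n m r).ker

/-- The generator `e^(i)_j` of the `i`-th factor, as an element of the direct product. -/
def gen (n m : ℕ) (i : Fin n) (j : Fin m) : ∀ _ : Fin n, FreeGroup (Fin m) :=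
  Pi.mulSingle i (FreeGroup.of j)

open scoped commutatorElement

/-
Let `N` be the subgroup generated by `S₁ ∪ S₂ ∪ S₃` and let `N_a ≤ F_m` consist of the `w` whose
copy `w^(a)` in the `a`-th factor lies in `N`. Writing `e^(a)_l = u · e^(b)_l` with
`u = e^(a)_l (e^(b)_l)⁻¹ ∈ N` and `e^(b)_l` commuting with the `a`-th factor shows that every
`N_a` is normal in `F_m`. Modulo `N_1` the generators of `F_m` commute (by `S₂` and `S₃`), so
`[F_m, F_m] ≤ N_1`, and the identity `[w^(a), v^(a)] = [u_w, u_v] · ([w⁻¹, v⁻¹]^(1))⁻¹` with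
`u_w = w^(a) (w^(1))⁻¹` carries this over to every `N_a`. Hence `N` contains the commutator
subgroup of the product, so it is normal with abelian quotient, and `θ` factors through `G / N`
via `t_i ↦ e^(1)_i N`; therefore `ker θ ≤ N`.
-/

namespace Pi

variable {ι F : Type*} [DecidableEq ι] [Group F]

lemma mulSingle_conj_eq {a b : ι} (hab : a ≠ b) (c s : F) :
    (mulSingle a (c * s * c⁻¹) : ι → F) = (mulSingle a c * (mulSingle b c)⁻¹) * mulSingle a s *
      (mulSingle a c * (mulSingle b c)⁻¹)⁻¹ := by
  funext k
  by_cases hka : k = a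
  · subst hka; simp [mulSingle_eq_of_ne hab]
  · by_cases hkb : k = b
    · subst hkb; simp [mulSingle_eq_of_ne hka]
    · simp [mulSingle_eq_of_ne hka, mulSingle_eq_of_ne hkb]

lemma mulSingle_commutatorElement_eq {a b : ι} (hab : a ≠ b) (c d : F) :
    (mulSingle a ⁅c, d⁆ : ι → F) =
      ⁅mulSingle a c * (mulSingle b c : ι → F)⁻¹, mulSingle a d * (mulSingle b d : ι → F)⁻¹⁆ *
        (mulSingle b ⁅c⁻¹, d⁻¹⁆)⁻¹ := by
  funext k
  by_cases hka : k = a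
  · subst hka; simp [mulSingle_eq_of_ne hab, commutatorElement_def]
  · by_cases hkb : k = b
    · subst hkb; simp [mulSingle_eq_of_ne hka, commutatorElement_def]
    · simp [mulSingle_eq_of_ne hka, mulSingle_eq_of_ne hkb, commutatorElement_def]

end Pi

namespace Subgroup

theorem Normal.commutator_le_of_closure_eq_top {G : Type*} [Group G] {H : Subgroup G} [H.Normal]
    {X : Set G} (hX : closure X = ⊤) (h : ∀ x ∈ X, ∀ y ∈ X, ⁅x, y⁆ ∈ H) :
    _root_.commutator G ≤ H := by
  refine quotient_commutative_iff_commutator_le.mp ⟨⟨fun p q => ?_⟩⟩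
  have hY : closure (QuotientGroup.mk' H '' X) = ⊤ := by
    rw [← MonoidHom.map_closure, hX, ← MonoidHom.range_eq_map, QuotientGroup.range_mk']
  have hcomm : ∀ x ∈ QuotientGroup.mk' H '' X, ∀ y ∈ QuotientGroup.mk' H '' X, x * y = y * x := by
    rintro _ ⟨x, hx, rfl⟩ _ ⟨y, hy, rfl⟩
    rw [← commutatorElement_eq_one_iff_mul_comm, ← map_commutatorElement,
      QuotientGroup.mk'_apply, QuotientGroup.eq_one_iff]
    exact h x hx y hy
  have hle := closure_le_centralizer_centralizer (QuotientGroup.mk' H '' X)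
  rw [hY] at hle
  exact Set.centralizer_centralizer_comm_of_comm hcomm p (hle trivial) q (hle trivial)

variable {ι F : Type*} [DecidableEq ι] [Group F] {N : Subgroup (ι → F)} {X : Set F} {a b : ι}

def factor (N : Subgroup (ι → F)) (a : ι) : Subgroup F :=
  N.comap (MonoidHom.mulSingle (fun _ => F) a)

lemma mem_factor {c : F} : c ∈ N.factor a ↔ Pi.mulSingle a c ∈ N :=
  Iff.rfl

theorem commutator_pi_le [Finite ι] (h : ∀ a, _root_.commutator F ≤ N.factor a) :
    _root_.commutator (ι → F) ≤ N :=
  calc _root_.commutator (ι → F) = ⁅pi Set.univ fun _ => ⊤, pi Set.univ fun _ => ⊤⁆ := by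
        rw [pi_top]; rfl
    _ ≤ pi Set.univ fun _ => _root_.commutator F := commutator_pi_pi_le _ _
    _ ≤ N := pi_le_iff.mpr fun a => map_le_iff_le_comap.mpr (h a)

theorem factor_normal (hX : closure X = ⊤) (hab : a ≠ b)
    (h : ∀ x ∈ X, Pi.mulSingle a x * (Pi.mulSingle b x)⁻¹ ∈ N) : (N.factor a).Normal := by
  rw [← normalizer_eq_top_iff, eq_top_iff, ← hX, closure_le]
  refine fun x hx => mem_normalizer_iff.mpr fun s => ?_
  rw [mem_factor, mem_factor, Pi.mulSingle_conj_eq hab,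
    mul_mem_cancel_right (inv_mem (h x hx)), mul_mem_cancel_left (h x hx)]

theorem commutator_le_factor_of_ne (hX : closure X = ⊤) (hab : a ≠ b)
    (h : ∀ x ∈ X, Pi.mulSingle a x * (Pi.mulSingle b x)⁻¹ ∈ N)
    (hb : _root_.commutator F ≤ N.factor b) : _root_.commutator F ≤ N.factor a := by
  have := factor_normal hX hab h
  refine Normal.commutator_le_of_closure_eq_top hX fun x hx y hy => ?_
  rw [mem_factor, Pi.mulSingle_commutatorElement_eq hab]
  exact mul_mem (N.commutator_le_self (commutator_mem_commutator (h x hx) (h y hy)))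
    (inv_mem (hb (commutator_mem_commutator (mem_top _) (mem_top _))))

end Subgroup

def piZPowHom {ι Q : Type*} [Fintype ι] [Group Q] [IsMulCommutative Q] (q : ι → Q) :
    Multiplicative (ι → ℤ) →* Q :=
  AddMonoidHom.toMultiplicativeLeft <| AddMonoidHom.noncommPiCoprod
    (fun i => zmultiplesHom (Additive Q) (Additive.ofMul (q i)))
    fun _ _ _ _ _ => Additive.toMul.injective (mul_comm' _ _)

lemma piZPowHom_ofAdd_single {ι Q : Type*} [Fintype ι] [DecidableEq ι] [Group Q]
    [IsMulCommutative Q] (q : ι → Q) (i : ι) :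
    piZPowHom q (Multiplicative.ofAdd (Pi.single i 1)) = q i := by
  refine (congrArg Additive.toMul (AddMonoidHom.noncommPiCoprod_single _ i 1)).trans ?_
  simp

section Kgrp

open Subgroup

variable {n m r : ℕ}

lemma thetaHom_gen (k : Fin n) (l : Fin m) : thetaHom n m r (gen n m k l) = tvec m r l := by
  simp [thetaHom, gen, Pi.mulSingle_apply, facHom, apply_ite (FreeGroup.lift _)]

lemma tvec_of_le {l : Fin m} (hl : r ≤ (l : ℕ)) : tvec m r l = 1 := by
  simp [tvec, not_lt.mpr hl]

lemma tvec_of_lt {l : Fin m} (hl : (l : ℕ) < r) :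
    tvec m r l = Multiplicative.ofAdd (Pi.single ⟨l, hl⟩ 1) := by
  simp [tvec, hl]

lemma commutatorElement_gen (k : Fin n) (i j : Fin m) :
    ⁅gen n m k i, gen n m k j⁆ = Pi.mulSingle k ⁅FreeGroup.of i, FreeGroup.of j⁆ :=
  (map_commutatorElement (MonoidHom.mulSingle (fun _ => FreeGroup (Fin m)) k) _ _).symm

lemma closure_range_gen : closure (Set.range (Function.uncurry (gen n m))) = ⊤ := by
  rw [eq_top_iff, ← pi_top Set.univ, pi_le_iff]
  intro k
  rw [map_le_iff_le_comap, ← FreeGroup.closure_range_of, closure_le]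
  rintro _ ⟨l, rfl⟩
  exact subset_closure ⟨(k, l), rfl⟩

lemma commutator_le_Kgrp : _root_.commutator (Fin n → FreeGroup (Fin m)) ≤ Kgrp n m r :=
  Abelianization.commutator_subset_ker _

variable {N : Subgroup (Fin n → FreeGroup (Fin m))} {z : Fin n}

lemma gen_mul_inv_gen_mem
    (hS₁ : ∀ (l : Fin m) (j : Fin n), (l : ℕ) < r → j ≠ z → gen n m z l * (gen n m j l)⁻¹ ∈ N)
    (hS₂ : ∀ (j : Fin n) (l : Fin m), r ≤ (l : ℕ) → gen n m j l ∈ N) (a b : Fin n) (l : Fin m) :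
    gen n m a l * (gen n m b l)⁻¹ ∈ N := by
  by_cases hl : (l : ℕ) < r
  · have hz : ∀ j, gen n m z l * (gen n m j l)⁻¹ ∈ N := fun j => by
      rcases eq_or_ne j z with rfl | hj
      · simp
      · exact hS₁ l j hl hj
    simpa [mul_assoc] using mul_mem (inv_mem (hz a)) (hz b)
  · exact mul_mem (hS₂ a l (not_lt.mp hl)) (inv_mem (hS₂ b l (not_lt.mp hl)))

theorem commutator_le_factor [(N.factor z).Normal]
    (hS₂ : ∀ (j : Fin n) (l : Fin m), r ≤ (l : ℕ) → gen n m j l ∈ N)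
    (hS₃ : ∀ i j : Fin m, (i : ℕ) < j → (j : ℕ) < r → ⁅gen n m z i, gen n m z j⁆ ∈ N) :
    _root_.commutator (FreeGroup (Fin m)) ≤ N.factor z := by
  refine Normal.commutator_le_of_closure_eq_top (FreeGroup.closure_range_of _) ?_
  rintro _ ⟨i, rfl⟩ _ ⟨j, rfl⟩
  by_cases hi : r ≤ (i : ℕ)
  · exact commutator_le_left _ _ (commutator_mem_commutator (hS₂ z i hi) (mem_top _))
  by_cases hj : r ≤ (j : ℕ)
  · exact commutator_le_right _ _ (commutator_mem_commutator (mem_top _) (hS₂ z j hj))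
  rw [mem_factor, ← commutatorElement_gen]
  rcases lt_trichotomy (i : ℕ) j with hij | hij | hij
  · exact hS₃ i j hij (not_le.mp hj)
  · rw [Fin.ext hij, commutatorElement_self]
    exact one_mem _
  · rw [← commutatorElement_inv]
    exact inv_mem (hS₃ j i hij (not_le.mp hi))

theorem Kgrp_le_of_commutator_le (hN : _root_.commutator (Fin n → FreeGroup (Fin m)) ≤ N)
    (hz : ∀ (k : Fin n) (l : Fin m), gen n m k l * (gen n m z l)⁻¹ ∈ N)
    (hS₂ : ∀ (j : Fin n) (l : Fin m), r ≤ (l : ℕ) → gen n m j l ∈ N) :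
    Kgrp n m r ≤ N := by
  have := Normal.of_commutator_le (h := hN)
  have := Normal.quotient_commutative_iff_commutator_le.mpr hN
  -- for `v ≥ m` the value is irrelevant: `t_v` is not in the image of `θ`
  let φ := piZPowHom fun v : Fin r =>
    if h : (v : ℕ) < m then (gen n m z ⟨v, h⟩ : _ ⧸ N) else 1
  have hφ : φ.comp (thetaHom n m r) = QuotientGroup.mk' N := by
    refine MonoidHom.eq_of_eqOn_dense closure_range_gen ?_
    rintro _ ⟨⟨k, l⟩, rfl⟩
    rw [Function.uncurry_apply_pair, MonoidHom.comp_apply, thetaHom_gen, QuotientGroup.mk'_apply]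
    by_cases hl : (l : ℕ) < r
    · rw [tvec_of_lt hl, piZPowHom_ofAdd_single, dif_pos l.isLt, QuotientGroup.eq_iff_div_mem]
      simpa [div_eq_mul_inv] using inv_mem (hz k l)
    · rw [tvec_of_le (not_lt.mp hl), map_one, eq_comm, QuotientGroup.eq_one_iff]
      exact hS₂ k l (not_lt.mp hl)
  intro g hg
  rw [← QuotientGroup.eq_one_iff, ← QuotientGroup.mk'_apply, ← hφ, MonoidHom.comp_apply,
    MonoidHom.mem_ker.mp hg, map_one]

theorem Kgrp_le_of_generators_mem (hn : 2 ≤ n)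
    (hS₁ : ∀ (l : Fin m) (j : Fin n), (l : ℕ) < r → j ≠ z → gen n m z l * (gen n m j l)⁻¹ ∈ N)
    (hS₂ : ∀ (j : Fin n) (l : Fin m), r ≤ (l : ℕ) → gen n m j l ∈ N)
    (hS₃ : ∀ i j : Fin m, (i : ℕ) < j → (j : ℕ) < r → ⁅gen n m z i, gen n m z j⁆ ∈ N) :
    Kgrp n m r ≤ N := by
  have hdiag := gen_mul_inv_gen_mem hS₁ hS₂
  have hX : ∀ a b : Fin n, ∀ x ∈ Set.range (FreeGroup.of (α := Fin m)),
      Pi.mulSingle a x * (Pi.mulSingle b x)⁻¹ ∈ N := by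
    rintro a b _ ⟨l, rfl⟩
    exact hdiag a b l
  have : Nontrivial (Fin n) := Fin.nontrivial_iff_two_le.mpr hn
  obtain ⟨b, hbz⟩ := exists_ne z
  have := factor_normal (FreeGroup.closure_range_of _) hbz.symm (hX z b)
  have hfactor_z := commutator_le_factor hS₂ hS₃
  have hfactor : ∀ a, _root_.commutator (FreeGroup (Fin m)) ≤ N.factor a := fun a => by
    rcases eq_or_ne a z with rfl | haz
    · exact hfactor_z
    · exact commutator_le_factor_of_ne (FreeGroup.closure_range_of _) haz (hX a z) hfactor_z
  exact Kgrp_le_of_commutator_le (commutator_pi_le hfactor) (fun k l => hdiag k z l) hS₂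

end Kgrp

/-- If `n ≥ 2`, `m ≥ 1` and `r ≤ m` then `K^n_m(r)` is generated by `S₁ ∪ S₂ ∪ S₃`, where
`S₁ = {e^(1)_i (e^(j)_i)⁻¹ : 1 ≤ i ≤ r, 2 ≤ j ≤ n}`,
`S₂ = {e^(j)_i : r+1 ≤ i ≤ m, 1 ≤ j ≤ n}` and
`S₃ = {[e^(1)_i, e^(1)_j] : 1 ≤ i < j ≤ r}`. -/
theorem Kgrp_generated (n m r : ℕ) (hn : 2 ≤ n) :
    Subgroup.closure
      ({x | ∃ (i : Fin m) (j : Fin n), (i : ℕ) < r ∧ 1 ≤ (j : ℕ) ∧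
          x = gen n m ⟨0, by omega⟩ i * (gen n m j i)⁻¹} ∪
       {x | ∃ (i : Fin m) (j : Fin n), r ≤ (i : ℕ) ∧ x = gen n m j i} ∪
       {x | ∃ (i j : Fin m), (i : ℕ) < (j : ℕ) ∧ (j : ℕ) < r ∧
          x = ⁅gen n m ⟨0, by omega⟩ i, gen n m ⟨0, by omega⟩ j⁆}) = Kgrp n m r := by
  refine le_antisymm ((Subgroup.closure_le _).mpr ?_) (Kgrp_le_of_generators_mem hn
    (fun l j hl hj => Subgroup.subset_closure (.inl (.inl
      ⟨l, j, hl, Nat.one_le_iff_ne_zero.mpr fun h => hj (Fin.ext h), rfl⟩)))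
    (fun j l hl => Subgroup.subset_closure (.inl (.inr ⟨l, j, hl, rfl⟩)))
    (fun i j hij hj => Subgroup.subset_closure (.inr ⟨i, j, hij, hj, rfl⟩)))
  rintro _ ((⟨i, j, -, -, rfl⟩ | ⟨i, j, hi, rfl⟩) | ⟨i, j, -, -, rfl⟩)
  · rw [SetLike.mem_coe, Kgrp, MonoidHom.mem_ker, map_mul, map_inv, thetaHom_gen, thetaHom_gen,
      mul_inv_cancel]
  · rw [SetLike.mem_coe, Kgrp, MonoidHom.mem_ker, thetaHom_gen, tvec_of_le hi]
  · exact commutator_le_Kgrp (Subgroup.commutator_mem_commutator (Subgroup.mem_top _)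
      (Subgroup.mem_top _))
end

section
/- Let n ≥ 2 and m ≥ 1. Let M ≤ K^n_m(m) be the image of K^{n-1}_m(m) under the inclusion of the first n−1 factors into F^(1)_m × … × F^(n)_m, and let F̂ ≤ F^(n-1)_m × F^(n)_m ≤ F^(1)_m × … × F^(n)_m be the subgroup generated by the m elements e^(n-1)_1 (e^(n)_1)^{-1}, …, e^(n-1)_m (e^(n)_m)^{-1}. Then K^n_m(m) is the internal semidirect product M ⋊ F̂: that is, M is a normal subgroup of K^n_m(m), F̂ ≤ K^n_m(m), M ∩ F̂ = {1}, M·F̂ = K^n_m(m); moreover F̂ is a free group of rank m on the listed generators. -/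
/-- The inclusion of `F_m^(1) × ⋯ × F_m^(n-1)` as the first `n-1` factors of
`F_m^(1) × ⋯ × F_m^(n)`. -/
def inclFirst (n m : ℕ) :
    (∀ _ : Fin (n - 1), FreeGroup (Fin m)) →* (∀ _ : Fin n, FreeGroup (Fin m)) where
  toFun g := fun i => if h : (i : ℕ) < n - 1 then g ⟨i, h⟩ else 1
  map_one' := by funext i; by_cases h : (i : ℕ) < n - 1 <;> simp [h]
  map_mul' a b := by funext i; by_cases h : (i : ℕ) < n - 1 <;> simp [h]

/-- The generator `e^(n-1)_j (e^(n)_j)⁻¹` of the subgroup `F̂ ≤ F_m^(n-1) × F_m^(n)`. -/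
def ghat (n m : ℕ) (hn : 2 ≤ n) (j : Fin m) : ∀ _ : Fin n, FreeGroup (Fin m) :=
  Pi.mulSingle (⟨n - 2, by omega⟩ : Fin n) (FreeGroup.of j) *
    (Pi.mulSingle (⟨n - 1, by omega⟩ : Fin n) (FreeGroup.of j))⁻¹

/-!
Let `pr` be the projection onto the last factor. The first `n - 1` factors form `ker pr`, so
`M = K^n_m(m) ∩ ker pr`. On the generators of `F̂`, `pr` is `e_j ↦ e_j⁻¹`, an involutive
automorphism of `F_m`; hence `F̂` is free on them and `pr` maps it isomorphically onto `F_m`,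
which makes `F̂` a complement of `K^n_m(m) ∩ ker pr` in `K^n_m(m)`.
-/

section Splitting

variable {G H : Type*} [Group G] [Group H]

theorem MonoidHom.ker_inf_range_eq_bot_of_injective_comp (p : G →* H) (s : H →* G)
    (h : Function.Injective (p.comp s)) : p.ker ⊓ s.range = ⊥ := by
  refine eq_bot_iff.mpr ?_
  rintro _ ⟨hker, w, rfl⟩
  have hw : w = 1 := h (by simpa using hker)
  simp [hw]

theorem MonoidHom.exists_mem_inf_ker_mul_mem_range (K : Subgroup G) (p : G →* H) (s : H →* G)
    (hsK : s.range ≤ K) (h : Function.Surjective (p.comp s)) :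
    ∀ x ∈ K, ∃ a ∈ K ⊓ p.ker, ∃ b ∈ s.range, x = a * b := by
  intro x hx
  obtain ⟨w, hw⟩ := h (p x)
  have hb : s w ∈ K := hsK ⟨w, rfl⟩
  refine ⟨x * (s w)⁻¹, Subgroup.mem_inf.mpr ⟨mul_mem hx (inv_mem hb), ?_⟩, s w, ⟨w, rfl⟩,
    by group⟩
  simp_all

end Splitting

def FreeGroup.invGen (α : Type*) : FreeGroup α →* FreeGroup α :=
  FreeGroup.lift fun a => (FreeGroup.of a)⁻¹

theorem FreeGroup.invGen_involutive (α : Type*) : Function.Involutive (FreeGroup.invGen α) :=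
  DFunLike.congr_fun (f := (invGen α).comp (invGen α)) (g := MonoidHom.id _)
    (FreeGroup.ext_hom _ _ fun a => by simp [invGen])

theorem thetaHom_mulSingle (n m r : ℕ) (a : Fin n) (x : FreeGroup (Fin m)) :
    thetaHom n m r (Pi.mulSingle a x) = facHom m r x := by
  change ∏ i, facHom m r ((Pi.mulSingle a x : ∀ _ : Fin n, FreeGroup (Fin m)) i) = _
  rw [Fintype.prod_eq_single a fun i hi => by rw [Pi.mulSingle_eq_of_ne hi, map_one]]
  simp

theorem thetaHom_succ (n m r : ℕ) (x : ∀ _ : Fin (n + 1), FreeGroup (Fin m)) :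
    thetaHom (n + 1) m r x =
      thetaHom n m r (fun i => x i.castSucc) * facHom m r (x (Fin.last n)) :=
  Fin.prod_univ_castSucc _

theorem inclFirst_apply_castSucc (n m : ℕ) (g : ∀ _ : Fin n, FreeGroup (Fin m)) (i : Fin n) :
    inclFirst (n + 1) m g i.castSucc = g i :=
  dif_pos i.isLt

theorem inclFirst_apply_last (n m : ℕ) (g : ∀ _ : Fin n, FreeGroup (Fin m)) :
    inclFirst (n + 1) m g (Fin.last n) = 1 :=
  dif_neg (by simp)

theorem inclFirst_restrict_of_apply_last (n m : ℕ) (x : ∀ _ : Fin (n + 1), FreeGroup (Fin m))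
    (hx : x (Fin.last n) = 1) : inclFirst (n + 1) m (fun i => x i.castSucc) = x := by
  funext i
  induction i using Fin.lastCases with
  | last => rw [inclFirst_apply_last, hx]
  | cast i => exact inclFirst_apply_castSucc n m _ i

theorem map_inclFirst_Kgrp (n m r : ℕ) :
    Subgroup.map (inclFirst (n + 1) m) (Kgrp n m r) =
      Kgrp (n + 1) m r ⊓ (Pi.evalMonoidHom (fun _ => FreeGroup (Fin m)) (Fin.last n)).ker := by
  ext x
  simp only [Subgroup.mem_map, Subgroup.mem_inf, MonoidHom.mem_ker, Pi.evalMonoidHom_apply,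
    Kgrp, thetaHom_succ]
  constructor
  · rintro ⟨g, hg, rfl⟩
    simp only [inclFirst_apply_castSucc, inclFirst_apply_last, map_one, mul_one]
    exact ⟨hg, trivial⟩
  · rintro ⟨hx, hlast⟩
    rw [hlast, map_one, mul_one] at hx
    exact ⟨_, hx, inclFirst_restrict_of_apply_last n m x hlast⟩

theorem range_lift_ghat_le_Kgrp (n m : ℕ) (hn : 2 ≤ n) :
    (FreeGroup.lift (ghat n m hn)).range ≤ Kgrp n m m := by
  rw [FreeGroup.range_lift_eq_closure, Subgroup.closure_le]
  rintro _ ⟨j, rfl⟩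
  change thetaHom n m m (ghat n m hn j) = 1
  rw [ghat, map_mul, map_inv, thetaHom_mulSingle, thetaHom_mulSingle, mul_inv_cancel]

theorem ghat_apply_last (n m : ℕ) (hn : 2 ≤ n + 2) (j : Fin m) :
    ghat (n + 2) m hn j (Fin.last (n + 1)) = (FreeGroup.of j)⁻¹ := by
  simp [ghat, Pi.mulSingle_apply, Fin.ext_iff]

theorem evalLast_comp_lift_ghat (n m : ℕ) (hn : 2 ≤ n + 2) :
    (Pi.evalMonoidHom (fun _ => FreeGroup (Fin m)) (Fin.last (n + 1))).comp
      (FreeGroup.lift (ghat (n + 2) m hn)) = FreeGroup.invGen (Fin m) :=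
  FreeGroup.ext_hom _ _ fun j => by simp [ghat_apply_last, FreeGroup.invGen]

theorem Kgrp_internal_semidirect_product_general (n m : ℕ) (hn : 2 ≤ n) :
    Subgroup.map (inclFirst n m) (Kgrp (n - 1) m m) ≤ Kgrp n m m ∧
    Subgroup.closure (Set.range (ghat n m hn)) ≤ Kgrp n m m ∧
    (∀ x ∈ Kgrp n m m, ∀ y ∈ Subgroup.map (inclFirst n m) (Kgrp (n - 1) m m),
      x * y * x⁻¹ ∈ Subgroup.map (inclFirst n m) (Kgrp (n - 1) m m)) ∧
    Subgroup.map (inclFirst n m) (Kgrp (n - 1) m m) ⊓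
        Subgroup.closure (Set.range (ghat n m hn)) = ⊥ ∧
    (∀ x ∈ Kgrp n m m, ∃ a ∈ Subgroup.map (inclFirst n m) (Kgrp (n - 1) m m),
      ∃ b ∈ Subgroup.closure (Set.range (ghat n m hn)), x = a * b) ∧
    Function.Injective
      (FreeGroup.lift (ghat n m hn) : FreeGroup (Fin m) →* ∀ _ : Fin n, FreeGroup (Fin m)) := by
  obtain ⟨l, rfl⟩ : ∃ l, n = l + 2 := ⟨n - 2, by omega⟩
  set pr := Pi.evalMonoidHom (fun _ => FreeGroup (Fin m)) (Fin.last (l + 1))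
  set s := FreeGroup.lift (ghat (l + 2) m hn)
  have hM : Subgroup.map (inclFirst (l + 2) m) (Kgrp (l + 2 - 1) m m) =
      Kgrp (l + 2) m m ⊓ pr.ker :=
    map_inclFirst_Kgrp (l + 1) m m
  have hbij : Function.Bijective (pr.comp s) := by
    rw [evalLast_comp_lift_ghat]
    exact (FreeGroup.invGen_involutive _).bijective
  rw [hM, ← FreeGroup.range_lift_eq_closure]
  refine ⟨inf_le_left, range_lift_ghat_le_Kgrp _ m hn, ?_, ?_,
    pr.exists_mem_inf_ker_mul_mem_range _ s (range_lift_ghat_le_Kgrp _ m hn) hbij.2,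
    hbij.1.of_comp (f := pr)⟩
  · exact fun x hx y hy =>
      Subgroup.mem_inf.mpr
        ⟨mul_mem (mul_mem hx hy.1) (inv_mem hx), pr.normal_ker.conj_mem y hy.2 x⟩
  · exact eq_bot_mono (inf_le_inf_right _ inf_le_right)
      (pr.ker_inf_range_eq_bot_of_injective_comp s hbij.1)

/-- For `n ≥ 2` and `m ≥ 1`, let `M` be the image of `K^{n-1}_m(m)` under the inclusion of
the first `n-1` factors, and let `F̂` be the subgroup generated by
`e^(n-1)_1 (e^(n)_1)⁻¹, …, e^(n-1)_m (e^(n)_m)⁻¹`.  Then `K^n_m(m)` is the internal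
semidirect product `M ⋊ F̂`: both are contained in `K^n_m(m)`, `M` is normal in `K^n_m(m)`,
`M ∩ F̂ = 1` and `M·F̂ = K^n_m(m)`; moreover `F̂` is free of rank `m` on the listed
generators. -/
theorem Kgrp_internal_semidirect_product (n m : ℕ) (hn : 2 ≤ n) (hm : 1 ≤ m) :
    Subgroup.map (inclFirst n m) (Kgrp (n - 1) m m) ≤ Kgrp n m m ∧
    Subgroup.closure (Set.range (ghat n m hn)) ≤ Kgrp n m m ∧
    (∀ x ∈ Kgrp n m m, ∀ y ∈ Subgroup.map (inclFirst n m) (Kgrp (n - 1) m m),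
      x * y * x⁻¹ ∈ Subgroup.map (inclFirst n m) (Kgrp (n - 1) m m)) ∧
    Subgroup.map (inclFirst n m) (Kgrp (n - 1) m m) ⊓
        Subgroup.closure (Set.range (ghat n m hn)) = ⊥ ∧
    (∀ x ∈ Kgrp n m m, ∃ a ∈ Subgroup.map (inclFirst n m) (Kgrp (n - 1) m m),
      ∃ b ∈ Subgroup.closure (Set.range (ghat n m hn)), x = a * b) ∧
    Function.Injective
      (FreeGroup.lift (ghat n m hn) : FreeGroup (Fin m) →* ∀ _ : Fin n, FreeGroup (Fin m)) :=
  Kgrp_internal_semidirect_product_general n m hn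
end

section
/- Let Γ = G_1 ∗_H G_2 be an amalgamated free product of finitely generated groups, where H is a proper subgroup of both G_1 and G_2. Let ⟨A_i | R_i⟩ be presentations of G_i with A_i finite and with every generator a ∈ A_i representing an element of G_i ∖ H. Let B be a finite generating set of H, for each b ∈ B let u_b be a word in A_1^{±1} and v_b a word in A_2^{±1} each equal to b in Γ, let E = { b u_b^{-1}, b v_b^{-1} : b ∈ B }, and suppose R_1' ⊆ R_1 and R_2' ⊆ R_2 are finite sets such that P = ⟨A_1, A_2, B | R_1', R_2', E⟩ is a presentation of Γ. Let w be a word in A_1^{±1} representing an element h ∈ H, let u be a word in A_1^{±1} representing an element α ∈ G_1 ∖ H, and let v be a word in A_2^{±1} representing an element β ∈ G_2 ∖ H, and suppose [α, h] = 1 and [β, h] = 1 in Γ. Then for every n ≥ 1, Area_P([w, (uv)^n]) ≥ 2n·d_B(1, h), where d_B is the word metric on H with respect to the generating set B. -/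
/-- `AreaLE R g N` says that, in the free group, `g` is a product of `N` conjugates of
elements of `R ∪ R⁻¹`. -/
def AreaLE {X : Type} (R : Set (FreeGroup X)) (g : FreeGroup X) (N : ℕ) : Prop :=
  ∃ x r : Fin N → FreeGroup X, (∀ i, r i ∈ R ∪ R⁻¹) ∧
    g = (List.ofFn (fun i => x i * r i * (x i)⁻¹)).prod

/-- The area of a null-homotopic word over the presentation with relator set `R`: the least
`N` such that the word is freely equal to a product of `N` conjugates of relators. -/
noncomputable def area {X : Type} (R : Set (FreeGroup X)) (g : FreeGroup X) : ℕ :=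
  sInf {N | AreaLE R g N}

/-- The word metric `d_B(1, h)` on a group `H` with respect to the generating family
`βmap : B → H`: the least `L` such that `h` is a product of `L` elements of `B ∪ B⁻¹`. -/
noncomputable def wordDist {B : Type} {H : Type} [Group H] (βmap : B → H) (h : H) : ℕ :=
  sInf {L | ∃ f : Fin L → H,
    (∀ i, ∃ b, f i = βmap b ∨ f i = (βmap b)⁻¹) ∧ (List.ofFn f).prod = h}

open scoped commutatorElement

section AmalgamatedProduct

variable (H : Type) [Group H] (G : Bool → Type) [∀ b, Group (G b)]
  (ι : ∀ b, H →* G b) (A : Bool → Type) (gpres : ∀ b, FreeGroup (A b) →* G b)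
  (B : Type) (βmap : B → H)

/-- The marking of the generators `A false ⊔ A true ⊔ B` of the presentation `P` in the
amalgamated product `Γ = G₁ ∗_H G₂`: a generator `a ∈ A b` is sent to the image in `Γ` of
the element of `G b` it represents, and a generator `b ∈ B` is sent to the image in `Γ` of
the corresponding element of `H`. -/
def muHom : FreeGroup (A false ⊕ A true ⊕ B) →* Monoid.PushoutI ι :=
  FreeGroup.lift (Sum.elim
    (fun a => Monoid.PushoutI.of (φ := ι) false (gpres false (FreeGroup.of a)))
    (Sum.elim
      (fun a => Monoid.PushoutI.of (φ := ι) true (gpres true (FreeGroup.of a)))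
      (fun b => Monoid.PushoutI.base ι (βmap b))))

/-- The relator set `R₁' ∪ R₂' ∪ E` of the presentation
`P = ⟨A false, A true, B | R₁', R₂', E⟩`, where `E = {b (u b)⁻¹, b (v b)⁻¹ : b ∈ B}`, all
viewed as words in the generators `A false ⊔ A true ⊔ B`. -/
def relSet (R₁' : Set (FreeGroup (A false))) (R₂' : Set (FreeGroup (A true)))
    (u : B → FreeGroup (A false)) (v : B → FreeGroup (A true)) :
    Set (FreeGroup (A false ⊕ A true ⊕ B)) :=
  FreeGroup.map Sum.inl '' R₁' ∪
  FreeGroup.map (Sum.inr ∘ Sum.inl) '' R₂' ∪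
  {x | ∃ b : B,
    x = FreeGroup.of (Sum.inr (Sum.inr b)) * (FreeGroup.map Sum.inl (u b))⁻¹ ∨
    x = FreeGroup.of (Sum.inr (Sum.inr b)) * (FreeGroup.map (Sum.inr ∘ Sum.inl) (v b))⁻¹}


end AmalgamatedProduct

/-!
Any homomorphism `Φ` from the free group into the wreath product `ℤ ≀ Γ` that sends every
relator to a function `Γ → ℤ` of sup-norm at most `1` gives a lower bound for areas: a product
of `N` conjugates of relators goes to a function of sup-norm at most `N`. Such a `Φ` is obtained
by weighting each generator `x` with a function `f_x : Γ → ℤ` and sending it to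
`(δf_x(μ x), μ x)`; a relator whose letters all carry the same weight goes to `0`.

Put `z = αβ`. By the normal form theorem, the cosets `zᵏ α H` are pairwise distinct and miss
the cosets `zᵏ H`, so there is a function `φ` with `φ (zᵏ α η) = |η|_B` and `φ = 0` elsewhere;
it changes by at most `1` under right multiplication by a generator of `H`. The weights
`2φ, 0, φ` on `A₁, A₂, B` send `b u_b⁻¹` and `b v_b⁻¹` to `∓δφ(b)`, so every relator is small.
Reading `[w, (uv)ⁿ]` from `1`, the path runs through `h, h z, …, h zⁿ` and back through
`zⁿ, …, z, 1`; each `u` on the way out crosses from `zᵏ h` to `zᵏ α h` and picks up `2 |h|_B`,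
each `u` on the way back crosses at `η = 1` and picks up `0`.
-/

namespace AmalgamatedArea

open Monoid

section Wreath

variable {Γ : Type} [Group Γ]

def rightTranslate : Γ →* MulAut (Γ → Multiplicative ℤ) where
  toFun γ :=
    { toFun := fun F x => F (x * γ)
      invFun := fun F x => F (x * γ⁻¹)
      left_inv := fun F => by simp [mul_assoc]
      right_inv := fun F => by simp [mul_assoc]
      map_mul' := fun _ _ => rfl }
  map_one' := by ext; simp
  map_mul' _ _ := by ext; simp [mul_assoc]

@[simp]
lemma rightTranslate_apply (γ : Γ) (F : Γ → Multiplicative ℤ) (x : Γ) :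
    rightTranslate γ F x = F (x * γ) := rfl

abbrev IntWreath (Γ : Type) [Group Γ] : Type :=
  (Γ → Multiplicative ℤ) ⋊[rightTranslate] Γ

lemma toAdd_mul_left (p q : IntWreath Γ) (x : Γ) :
    ((p * q).left x).toAdd = (p.left x).toAdd + (q.left (x * p.right)).toAdd := by
  simp

lemma toAdd_inv_left (p : IntWreath Γ) (x : Γ) :
    (p⁻¹.left x).toAdd = -(p.left (x * p.right⁻¹)).toAdd := by
  rfl

lemma pow_right (p : IntWreath Γ) (n : ℕ) : (p ^ n).right = p.right ^ n :=
  map_pow SemidirectProduct.rightHom p n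

lemma toAdd_pow_left (p : IntWreath Γ) (n : ℕ) (x : Γ) :
    ((p ^ n).left x).toAdd = ∑ k ∈ Finset.range n, (p.left (x * p.right ^ k)).toAdd := by
  induction n with
  | zero => simp
  | succ n ih => rw [pow_succ, toAdd_mul_left, ih, pow_right, Finset.sum_range_succ]

lemma toAdd_commutatorElement_left (p q : IntWreath Γ) (hpq : Commute p.right q.right)
    (x : Γ) :
    ((⁅p, q⁆).left x).toAdd = (p.left x).toAdd + (q.left (x * p.right)).toAdd
      - (p.left (x * q.right)).toAdd - (q.left x).toAdd := by
  simp only [commutatorElement_def, toAdd_mul_left, toAdd_inv_left,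
    SemidirectProduct.mul_right, SemidirectProduct.inv_right]
  have e₁ : x * (p.right * q.right) * p.right⁻¹ = x * q.right := by rw [hpq.eq]; group
  have e₂ : x * (p.right * q.right * p.right⁻¹) * q.right⁻¹ = x := by rw [hpq.eq]; group
  rw [e₁, e₂]
  ring

def coboundaryHom (f : Γ → ℤ) : Γ →* IntWreath Γ where
  toFun γ := ⟨fun x => .ofAdd (f (x * γ) - f x), γ⟩
  map_one' := SemidirectProduct.ext (by ext; simp) rfl
  map_mul' γ₁ γ₂ := SemidirectProduct.ext (by ext x; simp [mul_assoc]) rfl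

@[simp]
lemma coboundaryHom_right (f : Γ → ℤ) (γ : Γ) : (coboundaryHom f γ).right = γ := rfl

@[simp]
lemma toAdd_coboundaryHom_left (f : Γ → ℤ) (γ x : Γ) :
    ((coboundaryHom f γ).left x).toAdd = f (x * γ) - f x := rfl

/-- At `x`, the left part of the image of a word is the sum of the increments of the weights
of its letters along the path it traces in `Γ` starting from `x`. -/
def coboundaryLift {X : Type} (μ : FreeGroup X →* Γ) (f : X → Γ → ℤ) :
    FreeGroup X →* IntWreath Γ :=
  FreeGroup.lift fun x => coboundaryHom (f x) (μ (.of x))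

lemma coboundaryLift_of {X : Type} (μ : FreeGroup X →* Γ) (f : X → Γ → ℤ) (x : X) :
    coboundaryLift μ f (.of x) = coboundaryHom (f x) (μ (.of x)) :=
  FreeGroup.lift_apply_of

lemma coboundaryLift_map {X Y : Type} (μ : FreeGroup X →* Γ) (f : X → Γ → ℤ)
    (j : Y → X) {f₀ : Γ → ℤ} (hf : ∀ y, f (j y) = f₀) (w : FreeGroup Y) :
    coboundaryLift μ f (FreeGroup.map j w) = coboundaryHom f₀ (μ (FreeGroup.map j w)) := by
  have : (coboundaryLift μ f).comp (FreeGroup.map j) =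
      (coboundaryHom f₀).comp (μ.comp (FreeGroup.map j)) :=
    FreeGroup.ext_hom _ _ fun y => by simp [coboundaryLift, hf]
  exact DFunLike.congr_fun this w

def BoundedBy (C : ℤ) (p : IntWreath Γ) : Prop :=
  p.right = 1 ∧ ∀ x, |(p.left x).toAdd| ≤ C

lemma boundedBy_one {C : ℤ} (hC : 0 ≤ C) : BoundedBy C (1 : IntWreath Γ) :=
  ⟨rfl, fun _ => by simpa using hC⟩

lemma BoundedBy.mul {C D : ℤ} {p q : IntWreath Γ} (hp : BoundedBy C p) (hq : BoundedBy D q) :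
    BoundedBy (C + D) (p * q) := by
  refine ⟨by simp [hp.1, hq.1], fun x => ?_⟩
  rw [toAdd_mul_left, hp.1, mul_one]
  exact (abs_add_le _ _).trans (add_le_add (hp.2 x) (hq.2 x))

lemma BoundedBy.inv {C : ℤ} {p : IntWreath Γ} (hp : BoundedBy C p) : BoundedBy C p⁻¹ := by
  refine ⟨by simp [hp.1], fun x => ?_⟩
  rw [toAdd_inv_left, abs_neg]
  exact hp.2 _

lemma BoundedBy.conj {C : ℤ} {p : IntWreath Γ} (hp : BoundedBy C p) (q : IntWreath Γ) :
    BoundedBy C (q * p * q⁻¹) := by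
  refine ⟨by simp [hp.1], fun x => ?_⟩
  rw [toAdd_mul_left, toAdd_mul_left, toAdd_inv_left]
  simp only [SemidirectProduct.mul_right, hp.1, mul_one, mul_inv_cancel_right,
    add_neg_cancel_comm]
  exact hp.2 _

lemma boundedBy_list_prod {C : ℤ} (l : List (IntWreath Γ)) (hl : ∀ p ∈ l, BoundedBy C p) :
    BoundedBy (l.length * C) l.prod := by
  induction l with
  | nil => simpa using boundedBy_one le_rfl
  | cons p l ih =>
    simp only [List.forall_mem_cons] at hl
    have := hl.1.mul (ih hl.2)
    rw [List.length_cons, List.prod_cons, Nat.cast_succ, add_one_mul, add_comm]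
    exact this

lemma boundedBy_coboundaryHom_mul_inv (f f' : Γ → ℤ) (γ : Γ) {C : ℤ}
    (h : ∀ x, |(f (x * γ) - f x) - (f' (x * γ) - f' x)| ≤ C) :
    BoundedBy C (coboundaryHom f γ * (coboundaryHom f' γ)⁻¹) := by
  refine ⟨by simp, fun x => ?_⟩
  rw [toAdd_mul_left, toAdd_inv_left]
  simpa [sub_eq_add_neg] using h x

end Wreath

section Area

variable {X : Type} {R : Set (FreeGroup X)} {g : FreeGroup X}

lemma exists_areaLE (hg : g ∈ Subgroup.normalClosure R) : ∃ N, AreaLE R g N := by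
  rw [Subgroup.normalClosure, ← Subgroup.mem_toSubmonoid, Subgroup.closure_toSubmonoid] at hg
  obtain ⟨l, hl, rfl⟩ := Submonoid.exists_list_of_mem_closure hg
  have hconj : ∀ i : Fin l.length, ∃ x r, r ∈ R ∪ R⁻¹ ∧ l.get i = x * r * x⁻¹ := by
    intro i
    rcases hl _ (l.get_mem i) with hi | hi <;>
      obtain ⟨r, hr, hc⟩ := Group.mem_conjugatesOfSet_iff.1 hi <;>
      obtain ⟨x, hx⟩ := isConj_iff.1 hc
    · exact ⟨x, r, .inl hr, hx.symm⟩
    · refine ⟨x, r⁻¹, .inr (Set.inv_mem_inv.mpr hr), ?_⟩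
      rw [← inv_inv (l.get i), ← hx]
      group
  choose x r hr hx using hconj
  exact ⟨l.length, x, r, hr, by simp only [← hx, List.ofFn_get]⟩

variable {Γ : Type} [Group Γ]

lemma abs_left_le_of_areaLE (Φ : FreeGroup X →* IntWreath Γ)
    (hR : ∀ r ∈ R, BoundedBy 1 (Φ r)) {N : ℕ} (hN : AreaLE R g N) (x : Γ) :
    |((Φ g).left x).toAdd| ≤ N := by
  obtain ⟨xs, rs, hrs, rfl⟩ := hN
  have hbound : BoundedBy (N * 1) (Φ (List.ofFn fun i => xs i * rs i * (xs i)⁻¹).prod) := by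
    rw [map_list_prod, List.map_ofFn]
    convert boundedBy_list_prod _ ?_ using 3
    · simp
    intro p hp
    obtain ⟨i, rfl⟩ := List.mem_ofFn.1 hp
    simp only [Function.comp_apply, map_mul, map_inv]
    rcases hrs i with hr | hr
    · exact (hR _ hr).conj _
    · simpa using (hR _ hr).inv.conj (Φ (xs i))
  simpa using hbound.2 x

lemma abs_left_le_area (Φ : FreeGroup X →* IntWreath Γ) (hR : ∀ r ∈ R, BoundedBy 1 (Φ r))
    (hg : g ∈ Subgroup.normalClosure R) (x : Γ) : |((Φ g).left x).toAdd| ≤ area R g :=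
  abs_left_le_of_areaLE Φ hR (Nat.sInf_mem (exists_areaLE hg)) x

end Area

section WordDist

variable {B H : Type} [Group H] (βmap : B → H)

lemma wordDist_one : wordDist βmap 1 = 0 :=
  Nat.eq_zero_of_le_zero (Nat.sInf_le ⟨Fin.elim0, fun i => i.elim0, by simp⟩)

lemma exists_word_mul {x c : H} (hc : ∃ b, c = βmap b ∨ c = (βmap b)⁻¹) {L : ℕ}
    (hL : ∃ f : Fin L → H,
      (∀ i, ∃ b, f i = βmap b ∨ f i = (βmap b)⁻¹) ∧ (List.ofFn f).prod = x) :
    ∃ f : Fin (L + 1) → H,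
      (∀ i, ∃ b, f i = βmap b ∨ f i = (βmap b)⁻¹) ∧ (List.ofFn f).prod = x * c := by
  obtain ⟨f, hf, rfl⟩ := hL
  refine ⟨Fin.snoc f c, fun i => ?_, by rw [List.ofFn_succ']; simp⟩
  induction i using Fin.lastCases with
  | last => simpa [eq_comm] using hc
  | cast i => simpa using hf i

lemma wordDist_mul_le (x : H) {c : H} (hc : ∃ b, c = βmap b ∨ c = (βmap b)⁻¹) :
    wordDist βmap (x * c) ≤ wordDist βmap x + 1 := by
  rcases Set.eq_empty_or_nonempty {L | ∃ f : Fin L → H, (∀ i, ∃ b, f i = βmap b ∨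
      f i = (βmap b)⁻¹) ∧ (List.ofFn f).prod = x} with hx | hx
  · have hc' : ∃ b, c⁻¹ = βmap b ∨ c⁻¹ = (βmap b)⁻¹ := by
      obtain ⟨b, rfl | rfl⟩ := hc
      exacts [⟨b, .inr rfl⟩, ⟨b, .inl (inv_inv _)⟩]
    have hxc : {L | ∃ f : Fin L → H, (∀ i, ∃ b, f i = βmap b ∨ f i = (βmap b)⁻¹) ∧
        (List.ofFn f).prod = x * c} = ∅ :=
      Set.eq_empty_of_forall_notMem fun L hL => Set.eq_empty_iff_forall_notMem.1 hx (L + 1)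
        (by simpa using exists_word_mul βmap hc' hL)
    simp [wordDist, hxc]
  · exact Nat.sInf_le (exists_word_mul βmap hc (Nat.sInf_mem hx))

lemma abs_wordDist_mul_sub_le (x : H) (b : B) :
    |(wordDist βmap (x * βmap b) : ℤ) - wordDist βmap x| ≤ 1 := by
  have h₁ := wordDist_mul_le βmap x ⟨b, .inl rfl⟩
  have h₂ := wordDist_mul_le βmap (x * βmap b) ⟨b, .inr rfl⟩
  rw [mul_inv_cancel_right] at h₂
  rw [abs_le]
  constructor <;> omega

end WordDist

section Potential

variable {Γ H : Type} [Group Γ] [Group H] (ι : H →* Γ) (s : ℕ → Γ) (F : H → ℤ)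

noncomputable def potential : Γ → ℤ :=
  Function.extend (fun p : ℕ × H => s p.1 * ι p.2) (fun p => F p.2) 0

variable {ι s}

lemma potential_apply (hs : Function.Injective fun p : ℕ × H => s p.1 * ι p.2)
    (k : ℕ) (η : H) :
    potential ι s F (s k * ι η) = F η :=
  hs.extend_apply (fun p => F p.2) 0 (k, η)

lemma potential_eq_zero {γ : Γ} (hγ : ∀ k η, s k * ι η ≠ γ) : potential ι s F γ = 0 :=
  Function.extend_apply' _ _ _ fun ⟨p, hp⟩ => hγ p.1 p.2 hp

lemma abs_potential_mul_sub_le (hs : Function.Injective fun p : ℕ × H => s p.1 * ι p.2)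
    {c : H} {L : ℤ} (hL : 0 ≤ L) (hF : ∀ η, |F (η * c) - F η| ≤ L) (γ : Γ) :
    |potential ι s F (γ * ι c) - potential ι s F γ| ≤ L := by
  by_cases hγ : ∃ k η, s k * ι η = γ
  · obtain ⟨k, η, rfl⟩ := hγ
    rw [mul_assoc, ← map_mul, potential_apply F hs, potential_apply F hs]
    exact hF η
  · simp only [not_exists] at hγ
    have hγc : ∀ k η, s k * ι η ≠ γ * ι c := fun k η h =>
      hγ k (η * c⁻¹) (by rw [map_mul, ← mul_assoc, h, map_inv, mul_inv_cancel_right])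
    simpa [potential_eq_zero F hγ, potential_eq_zero F hγc] using hL

end Potential

section Cosets

variable {Γ H : Type} [Group Γ] [Group H] {ι : H →* Γ} {a b : Γ}

lemma inv_mul_mul_pow_mul (a b : Γ) (t : ℕ) : a⁻¹ * (a * b) ^ t * a = (b * a) ^ t := by
  rw [mul_assoc, ← (SemiconjBy.pow_right (mul_assoc a b a).symm t).eq, inv_mul_cancel_left]

lemma inv_mul_mul_pow_succ (a b : Γ) (t : ℕ) : a⁻¹ * (a * b) ^ (t + 1) = (b * a) ^ t * b := by
  rw [pow_succ', mul_assoc, inv_mul_cancel_left,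
    (SemiconjBy.pow_right (mul_assoc b a b).symm t).eq]

lemma injective_pow_mul_mul (hι : Function.Injective ι)
    (hba : ∀ t, (b * a) ^ (t + 1) ∉ ι.range) :
    Function.Injective fun p : ℕ × H => (a * b) ^ p.1 * a * ι p.2 := by
  suffices key : ∀ j t η η', (a * b) ^ (j + t) * a * ι η = (a * b) ^ j * a * ι η' →
      t = 0 ∧ η = η' by
    rintro ⟨k, η⟩ ⟨j, η'⟩ h
    rcases le_total j k with hjk | hkj
    · obtain ⟨t, rfl⟩ := Nat.exists_eq_add_of_le hjk
      obtain ⟨rfl, rfl⟩ := key j t η η' h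
      rfl
    · obtain ⟨t, rfl⟩ := Nat.exists_eq_add_of_le hkj
      obtain ⟨rfl, rfl⟩ := key k t η' η h.symm
      rfl
  intro j t η η' h
  have h' : (a * b) ^ t * a * ι η = a * ι η' :=
    mul_left_cancel (a := (a * b) ^ j) (by simpa only [pow_add, mul_assoc] using h)
  have hconj : (b * a) ^ t = ι (η' * η⁻¹) := by
    rw [← inv_mul_mul_pow_mul, map_mul, map_inv, eq_mul_inv_iff_mul_eq, mul_assoc, mul_assoc,
      ← mul_assoc ((a * b) ^ t), h', inv_mul_cancel_left]
  cases t with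
  | zero =>
    have : η' * η⁻¹ = 1 := hι (by rw [map_one, ← hconj, pow_zero])
    exact ⟨rfl, (mul_inv_eq_one.1 this).symm⟩
  | succ t => exact absurd ⟨_, hconj.symm⟩ (hba t)

lemma pow_mul_mul_ne (hab : ∀ t, (a * b) ^ t * a ∉ ι.range)
    (hba : ∀ t, (b * a) ^ t * b ∉ ι.range) (k m : ℕ) (η η' : H) :
    (a * b) ^ m * a * ι η' ≠ (a * b) ^ k * ι η := by
  intro h
  rcases le_total m k with hmk | hkm
  · obtain ⟨t, rfl⟩ := Nat.exists_eq_add_of_le hmk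
    have h' : a * ι η' = (a * b) ^ t * ι η :=
      mul_left_cancel (a := (a * b) ^ m) (by simpa only [pow_add, mul_assoc] using h)
    have hmem : a⁻¹ * (a * b) ^ t ∈ ι.range :=
      ⟨η' * η⁻¹, by rw [map_mul, map_inv, eq_inv_mul_iff_mul_eq, ← mul_assoc, h',
        mul_inv_cancel_right]⟩
    cases t with
    | zero => exact hab 0 (by simpa using inv_mem hmem)
    | succ t => exact hba t (inv_mul_mul_pow_succ a b t ▸ hmem)
  · obtain ⟨s, rfl⟩ := Nat.exists_eq_add_of_le hkm
    have h' : (a * b) ^ s * a * ι η' = ι η :=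
      mul_left_cancel (a := (a * b) ^ k) (by simpa only [pow_add, mul_assoc] using h)
    exact hab s ⟨η * η'⁻¹, by rw [map_mul, ← h', map_inv, mul_inv_cancel_right]⟩

end Cosets

section Evaluation

variable {Γ H : Type} [Group Γ] [Group H] {ι : H →* Γ} {a b : Γ}

lemma toAdd_commutator_potential_left
    (hinj : Function.Injective fun p : ℕ × H => (a * b) ^ p.1 * a * ι p.2)
    (hne : ∀ k m η η', (a * b) ^ m * a * ι η' ≠ (a * b) ^ k * ι η) {h : H}
    (hha : Commute (ι h) a) (hhb : Commute (ι h) b) (F : H → ℤ) (n : ℕ) :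
    let ψ := 2 • potential ι (fun k => (a * b) ^ k * a) F
    ((⁅coboundaryHom ψ (ι h), (coboundaryHom ψ a * coboundaryHom 0 b) ^ n⁆).left 1).toAdd =
      2 * n * (F h - F 1) := by
  set φ := potential ι (fun k => (a * b) ^ k * a) F
  intro ψ
  have hz : Commute (ι h) ((a * b) ^ n) := (hha.mul_right hhb).pow_right n
  have off : ∀ k η, φ ((a * b) ^ k * ι η) = 0 :=
    fun k η => potential_eq_zero F fun m η' => hne k m η η'
  have off₁ : ∀ k, φ ((a * b) ^ k) = 0 := fun k => by simpa using off k 1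
  have on : ∀ k η, φ ((a * b) ^ k * a * ι η) = F η := potential_apply F hinj
  have on₁ : ∀ k, φ ((a * b) ^ k * a) = F 1 := fun k => by simpa using on k 1
  have at_h : φ (ι h) = 0 := by simpa using off 0 h
  have at_one : φ 1 = 0 := by simpa using off₁ 0
  have e₁ : ∀ k : ℕ, ι h * (a * b) ^ k = (a * b) ^ k * ι h :=
    fun k => ((hha.mul_right hhb).pow_right k).eq
  have e₂ : ∀ k : ℕ, (a * b) ^ k * ι h * a = (a * b) ^ k * a * ι h := fun k => by
    rw [mul_assoc, hha.eq, mul_assoc]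
  rw [toAdd_commutatorElement_left _ _ (by simpa [pow_right] using hz)]
  simp only [ψ, toAdd_pow_left, toAdd_mul_left, toAdd_coboundaryHom_left, coboundaryHom_right,
    SemidirectProduct.mul_right, pow_right, Pi.smul_apply, Pi.zero_apply, one_mul, e₁, e₂]
  simp only [off, off₁, on, on₁, at_h, at_one, sub_self, add_zero, Finset.sum_const,
    Finset.card_range, nsmul_eq_mul]
  ring

end Evaluation

section NormalForm

variable {G : Bool → Type}

def altList (c : ∀ i, G i) : Bool → ℕ → List ((i : Bool) × G i)
  | _, 0 => []
  | i, n + 1 => ⟨i, c i⟩ :: altList c (!i) n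

lemma isChain_altList (c : ∀ i, G i) (i : Bool) (n : ℕ) :
    (altList c i n).IsChain fun l l' => l.1 ≠ l'.1 := by
  induction n generalizing i with
  | zero => simp [altList]
  | succ n ih =>
    refine (ih !i).cons fun l hl => ?_
    cases n with
    | zero => simp [altList] at hl
    | succ n =>
      simp only [altList, List.head?_cons, Option.mem_some_iff] at hl
      simp [← hl]

lemma mem_altList {c : ∀ i, G i} {i : Bool} {n : ℕ} {l : (i : Bool) × G i}
    (hl : l ∈ altList c i n) : ∃ j, l = ⟨j, c j⟩ := by
  induction n generalizing i with
  | zero => simp [altList] at hl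
  | succ n ih =>
    rcases List.mem_cons.1 hl with rfl | hl
    exacts [⟨i, rfl⟩, ih hl]

lemma altList_add_two (c : ∀ i, G i) (i : Bool) (n : ℕ) :
    altList c i (n + 2) = ⟨i, c i⟩ :: ⟨!i, c !i⟩ :: altList c i n := by
  simp [altList]

variable [∀ i, Group (G i)] {H : Type} [Group H] {ι : ∀ i, H →* G i}

lemma prod_altList_not_mem_range (hι : ∀ i, Function.Injective (ι i)) {c : ∀ i, G i}
    (hc : ∀ i, c i ∉ (ι i).range) (i : Bool) {n : ℕ} (hn : n ≠ 0) :
    ((altList c i n).map fun l => PushoutI.of (φ := ι) l.1 l.2).prod ∉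
      (PushoutI.base ι).range := by
  have hc₁ : ∀ l ∈ altList c i n, l.2 ≠ 1 := fun l hl h1 => by
    obtain ⟨j, rfl⟩ := mem_altList hl
    exact hc j ⟨1, (map_one _).trans h1.symm⟩
  let w : CoprodI.Word G := ⟨altList c i n, hc₁, isChain_altList c i n⟩
  have hw : PushoutI.Reduced ι w := fun l hl => by
    obtain ⟨j, rfl⟩ := mem_altList hl
    exact hc j
  intro hmem
  have := congrArg CoprodI.Word.toList <| hw.eq_empty_of_mem_range hι <| by
    simpa [w, CoprodI.Word.prod, map_list_prod, Function.comp_def] using hmem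
  cases n with
  | zero => exact hn rfl
  | succ n => simp [w, altList, CoprodI.Word.empty] at this

lemma prod_altList_two_mul (c : ∀ i, G i) (i : Bool) (t : ℕ) :
    ((altList c i (2 * t)).map fun l => PushoutI.of (φ := ι) l.1 l.2).prod =
      (PushoutI.of (φ := ι) i (c i) * PushoutI.of (!i) (c !i)) ^ t := by
  induction t with
  | zero => simp [altList]
  | succ t ih => simp [Nat.mul_succ, altList_add_two, ih, pow_succ', mul_assoc]

lemma prod_altList_two_mul_add_one (c : ∀ i, G i) (i : Bool) (t : ℕ) :
    ((altList c i (2 * t + 1)).map fun l => PushoutI.of (φ := ι) l.1 l.2).prod =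
      (PushoutI.of (φ := ι) i (c i) * PushoutI.of (!i) (c !i)) ^ t * PushoutI.of i (c i) := by
  induction t with
  | zero => simp [altList]
  | succ t ih =>
    rw [show 2 * (t + 1) + 1 = 2 * t + 1 + 2 by ring, altList_add_two]
    simp [ih, pow_succ', mul_assoc]

lemma pow_mul_not_mem_range (hι : ∀ i, Function.Injective (ι i)) {c : ∀ i, G i}
    (hc : ∀ i, c i ∉ (ι i).range) (i : Bool) (t : ℕ) :
    (PushoutI.of (φ := ι) i (c i) * PushoutI.of (!i) (c !i)) ^ t * PushoutI.of i (c i) ∉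
      (PushoutI.base ι).range := by
  rw [← prod_altList_two_mul_add_one]
  exact prod_altList_not_mem_range hι hc i (by omega)

lemma pow_succ_not_mem_range (hι : ∀ i, Function.Injective (ι i)) {c : ∀ i, G i}
    (hc : ∀ i, c i ∉ (ι i).range) (i : Bool) (t : ℕ) :
    (PushoutI.of (φ := ι) i (c i) * PushoutI.of (!i) (c !i)) ^ (t + 1) ∉
      (PushoutI.base ι).range := by
  rw [← prod_altList_two_mul]
  exact prod_altList_not_mem_range hι hc i (by omega)

variable (hι : ∀ i, Function.Injective (ι i)) {x : G false} {y : G true}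
  (hx : x ∉ (ι false).range) (hy : y ∉ (ι true).range)
include hι hx hy

lemma injective_pow_mul_mul_base :
    Function.Injective fun p : ℕ × H =>
      (PushoutI.of (φ := ι) false x * PushoutI.of true y) ^ p.1 * PushoutI.of false x *
        PushoutI.base ι p.2 :=
  have hc : ∀ i, (Bool.rec x y i : G i) ∉ (ι i).range := Bool.forall_bool.2 ⟨hx, hy⟩
  injective_pow_mul_mul (PushoutI.base_injective hι) (pow_succ_not_mem_range hι hc true)

lemma pow_mul_mul_base_ne (k m : ℕ) (η η' : H) :
    (PushoutI.of (φ := ι) false x * PushoutI.of true y) ^ m * PushoutI.of false x *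
      PushoutI.base ι η' ≠
    (PushoutI.of (φ := ι) false x * PushoutI.of true y) ^ k * PushoutI.base ι η :=
  have hc : ∀ i, (Bool.rec x y i : G i) ∉ (ι i).range := Bool.forall_bool.2 ⟨hx, hy⟩
  pow_mul_mul_ne (pow_mul_not_mem_range hι hc false) (pow_mul_not_mem_range hι hc true) k m η η'

end NormalForm

section AmalgamatedProduct

variable {H : Type} [Group H] {G : Bool → Type} [∀ b, Group (G b)] {ι : ∀ b, H →* G b}
  {A : Bool → Type} {gpres : ∀ b, FreeGroup (A b) →* G b} {B : Type} {βmap : B → H}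

lemma muHom_map_inl (p : FreeGroup (A false)) :
    muHom H G ι A gpres B βmap (FreeGroup.map Sum.inl p) = PushoutI.of false (gpres false p) := by
  have : (muHom H G ι A gpres B βmap).comp (FreeGroup.map Sum.inl) =
      (PushoutI.of false).comp (gpres false) :=
    FreeGroup.ext_hom _ _ fun _ => by simp [muHom]
  exact DFunLike.congr_fun this p

lemma muHom_map_inr_inl (p : FreeGroup (A true)) :
    muHom H G ι A gpres B βmap (FreeGroup.map (Sum.inr ∘ Sum.inl) p) =
      PushoutI.of true (gpres true p) := by
  have : (muHom H G ι A gpres B βmap).comp (FreeGroup.map (Sum.inr ∘ Sum.inl)) =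
      (PushoutI.of true).comp (gpres true) :=
    FreeGroup.ext_hom _ _ fun _ => by simp [muHom]
  exact DFunLike.congr_fun this p

lemma commute_base_of {i : Bool} {x : G i} {h : H} (hx : ⁅x, ι i h⁆ = 1) :
    Commute (PushoutI.base ι h) (PushoutI.of i x) := by
  rw [← PushoutI.of_apply_eq_base ι i]
  exact ((commutatorElement_eq_one_iff_commute.1 hx).map _).symm

variable (ι gpres βmap) in
def testHom (φ : PushoutI ι → ℤ) :
    FreeGroup (A false ⊕ A true ⊕ B) →* IntWreath (PushoutI ι) :=
  coboundaryLift (muHom H G ι A gpres B βmap)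
    (Sum.elim (fun _ => 2 • φ) (Sum.elim (fun _ => 0) fun _ => φ))

lemma testHom_map_inl (φ : PushoutI ι → ℤ) (p : FreeGroup (A false)) :
    testHom ι gpres βmap φ (FreeGroup.map Sum.inl p) =
      coboundaryHom (2 • φ) (PushoutI.of false (gpres false p)) := by
  rw [testHom, coboundaryLift_map _ _ Sum.inl (f₀ := 2 • φ) fun _ => rfl, muHom_map_inl]

lemma testHom_map_inr_inl (φ : PushoutI ι → ℤ) (p : FreeGroup (A true)) :
    testHom ι gpres βmap φ (FreeGroup.map (Sum.inr ∘ Sum.inl) p) =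
      coboundaryHom 0 (PushoutI.of true (gpres true p)) := by
  rw [testHom, coboundaryLift_map _ _ (Sum.inr ∘ Sum.inl) (f₀ := 0) fun _ => rfl,
    muHom_map_inr_inl]

lemma boundedBy_testHom_of_mem_relSet {φ : PushoutI ι → ℤ}
    (hφ : ∀ γ b, |φ (γ * PushoutI.base ι (βmap b)) - φ γ| ≤ 1)
    {R₁' : Set (FreeGroup (A false))} (hR₁ : R₁' ⊆ (gpres false).ker)
    {R₂' : Set (FreeGroup (A true))} (hR₂ : R₂' ⊆ (gpres true).ker)
    {u : B → FreeGroup (A false)} {v : B → FreeGroup (A true)}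
    (hu : ∀ b, PushoutI.of (φ := ι) false (gpres false (u b)) = PushoutI.base ι (βmap b))
    (hv : ∀ b, PushoutI.of (φ := ι) true (gpres true (v b)) = PushoutI.base ι (βmap b))
    {r : FreeGroup (A false ⊕ A true ⊕ B)} (hr : r ∈ relSet A B R₁' R₂' u v) :
    BoundedBy 1 (testHom ι gpres βmap φ r) := by
  have hgen : ∀ b, testHom ι gpres βmap φ (.of (.inr (.inr b))) =
      coboundaryHom φ (PushoutI.base ι (βmap b)) := fun b => by
    simp [testHom, coboundaryLift_of, muHom]
  rcases hr with (⟨r, hr, rfl⟩ | ⟨r, hr, rfl⟩) | ⟨b, rfl | rfl⟩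
  · rw [testHom_map_inl, hR₁ hr, map_one, map_one]
    exact boundedBy_one zero_le_one
  · rw [testHom_map_inr_inl, hR₂ hr, map_one, map_one]
    exact boundedBy_one zero_le_one
  · rw [map_mul, map_inv, hgen, testHom_map_inl, hu]
    refine boundedBy_coboundaryHom_mul_inv _ _ _ fun x => ?_
    convert (abs_neg _).trans_le (hφ x b) using 2
    simp only [Pi.smul_apply]
    ring
  · rw [map_mul, map_inv, hgen, testHom_map_inr_inl, hv]
    refine boundedBy_coboundaryHom_mul_inv _ _ _ fun x => ?_
    simpa using hφ x b

end AmalgamatedProduct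

end AmalgamatedArea

section AmalgamatedProduct

variable (H : Type) [Group H] (G : Bool → Type) [∀ b, Group (G b)]
  (ι : ∀ b, H →* G b) (A : Bool → Type) (gpres : ∀ b, FreeGroup (A b) →* G b)
  (B : Type) (βmap : B → H)

open AmalgamatedArea Monoid in
theorem area_lower_bound_amalgamated_product
    (hιinj : ∀ b, Function.Injective (ι b))
    (Rel : ∀ b, Set (FreeGroup (A b)))
    (hRel : ∀ b, (gpres b).ker = Subgroup.normalClosure (Rel b))
    (u : B → FreeGroup (A false)) (v : B → FreeGroup (A true))
    (hu : ∀ b, Monoid.PushoutI.of (φ := ι) false (gpres false (u b)) =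
      Monoid.PushoutI.base ι (βmap b))
    (hv : ∀ b, Monoid.PushoutI.of (φ := ι) true (gpres true (v b)) =
      Monoid.PushoutI.base ι (βmap b))
    (R₁' : Set (FreeGroup (A false))) (hR₁ : R₁' ⊆ Rel false)
    (R₂' : Set (FreeGroup (A true))) (hR₂ : R₂' ⊆ Rel true)
    (hker : (muHom H G ι A gpres B βmap).ker =
      Subgroup.normalClosure (relSet A B R₁' R₂' u v))
    (w : FreeGroup (A false)) (h : H) (hw : gpres false w = ι false h)
    (uw : FreeGroup (A false)) (α : G false) (huw : gpres false uw = α)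
    (hα : α ∉ (ι false).range)
    (vw : FreeGroup (A true)) (β : G true) (hvw : gpres true vw = β)
    (hβ' : β ∉ (ι true).range)
    (hcomm₁ : ⁅α, ι false h⁆ = 1) (hcomm₂ : ⁅β, ι true h⁆ = 1) :
    ∀ n : ℕ, 1 ≤ n →
      2 * n * wordDist βmap h ≤
        area (relSet A B R₁' R₂' u v)
          ⁅(FreeGroup.map Sum.inl w : FreeGroup (A false ⊕ A true ⊕ B)),
            (FreeGroup.map Sum.inl uw *
              FreeGroup.map (Sum.inr ∘ Sum.inl) vw : FreeGroup (A false ⊕ A true ⊕ B)) ^ n⁆ := by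
  intro n _
  have hinj := injective_pow_mul_mul_base hιinj hα hβ'
  have hne := pow_mul_mul_base_ne hιinj hα hβ'
  have hha := commute_base_of hcomm₁
  have hhb := commute_base_of hcomm₂
  let F : H → ℤ := fun η => wordDist βmap η
  let φ := potential (PushoutI.base ι)
    (fun k => (PushoutI.of false α * PushoutI.of true β) ^ k * PushoutI.of false α) F
  have hφ : ∀ γ x, |φ (γ * PushoutI.base ι (βmap x)) - φ γ| ≤ 1 := fun γ x =>
    abs_potential_mul_sub_le F hinj zero_le_one (fun η => abs_wordDist_mul_sub_le βmap η x) γ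
  have hmem : ⁅(FreeGroup.map Sum.inl w : FreeGroup (A false ⊕ A true ⊕ B)),
      (FreeGroup.map Sum.inl uw * FreeGroup.map (Sum.inr ∘ Sum.inl) vw) ^ n⁆ ∈
        Subgroup.normalClosure (relSet A B R₁' R₂' u v) := by
    rw [← hker, MonoidHom.mem_ker, map_commutatorElement, map_pow, map_mul, muHom_map_inl,
      muHom_map_inl, muHom_map_inr_inl, hw, huw, hvw, PushoutI.of_apply_eq_base,
      commutatorElement_eq_one_iff_commute]
    exact (hha.mul_right hhb).pow_right n
  have hbound := abs_left_le_area (testHom ι gpres βmap φ)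
    (fun r hr => boundedBy_testHom_of_mem_relSet hφ
      (hR₁.trans (hRel false ▸ Subgroup.subset_normalClosure))
      (hR₂.trans (hRel true ▸ Subgroup.subset_normalClosure)) hu hv hr) hmem 1
  rw [map_commutatorElement, map_pow, map_mul, testHom_map_inl, testHom_map_inl,
    testHom_map_inr_inl, hw, huw, hvw, PushoutI.of_apply_eq_base,
    toAdd_commutator_potential_left hinj hne hha hhb] at hbound
  have hF : F h - F 1 = wordDist βmap h := by simp [F, wordDist_one]
  rw [hF, abs_of_nonneg (by positivity)] at hbound
  exact_mod_cast hbound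
end AmalgamatedProduct
end

section
/- Let F_3 be the free group on a, b, c and F_2 the free group on x, y, and let φ, ψ : F_3 → F_2 be the homomorphisms determined by φ(a) = x, φ(b) = y, φ(c) = [x,y] and ψ(a) = x, ψ(b) = y, ψ(c) = 1, where [x,y] = xyx^{-1}y^{-1}. Fix n ≥ 1. If w is any word in the letters {a, b, c}^{±1} such that φ(w) = [x^n, y^n] in F_2 and ψ(w) = 1 in F_2, then the number of occurrences of the letters c and c^{-1} in w is at least n². -/
open scoped commutatorElement

/-- The generator `x` of the free group `F_2 = F(x, y)`. -/
def xgen : FreeGroup (Fin 2) := FreeGroup.of 0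
/-- The generator `y` of the free group `F_2 = F(x, y)`. -/
def ygen : FreeGroup (Fin 2) := FreeGroup.of 1

/-- The homomorphism `φ : F(a,b,c) → F(x,y)` with `φ(a) = x`, `φ(b) = y`,
`φ(c) = [x,y]`. -/
def phiHom : FreeGroup (Fin 3) →* FreeGroup (Fin 2) :=
  FreeGroup.lift (fun i => if i = 0 then xgen else if i = 1 then ygen else ⁅xgen, ygen⁆)

/-- The homomorphism `ψ : F(a,b,c) → F(x,y)` with `ψ(a) = x`, `ψ(b) = y`, `ψ(c) = 1`. -/
def psiHom : FreeGroup (Fin 3) →* FreeGroup (Fin 2) :=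
  FreeGroup.lift (fun i => if i = 0 then xgen else if i = 1 then ygen else 1)

/-!
Map `F_2` onto the integral Heisenberg group `H` (the free nilpotent group of class 2) by
`x ↦ (1, 0, 0)`, `y ↦ (0, 1, 0)`. In `H` the images of `φ(c) = [x, y]` and `ψ(c) = 1` differ by
the central generator `z`, so for every `g` the images of `φ g` and `ψ g` differ by `z ^ e`, where
`e` is the exponent sum of `c` in `g`. Since `[x^n, y^n] ↦ z^(n²)` and `ψ(w) = 1`, the exponent sum
of `c` in `w` is `n²`, and it is at most the number of letters `c^{±1}`.
-/

@[ext]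
structure Heisenberg (R : Type*) where
  a : R
  b : R
  c : R

namespace Heisenberg

variable {R : Type*} [CommRing R]

-- upper unitriangular matrices `[[1, a, c], [0, 1, b], [0, 0, 1]]` under matrix multiplication
instance : Mul (Heisenberg R) := ⟨fun p q => ⟨p.a + q.a, p.b + q.b, p.c + q.c + p.a * q.b⟩⟩
instance : One (Heisenberg R) := ⟨⟨0, 0, 0⟩⟩
instance : Inv (Heisenberg R) := ⟨fun p => ⟨-p.a, -p.b, -p.c + p.a * p.b⟩⟩

lemma mul_def (p q : Heisenberg R) : p * q = ⟨p.a + q.a, p.b + q.b, p.c + q.c + p.a * q.b⟩ := rfl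
lemma one_def : (1 : Heisenberg R) = ⟨0, 0, 0⟩ := rfl
lemma inv_def (p : Heisenberg R) : p⁻¹ = ⟨-p.a, -p.b, -p.c + p.a * p.b⟩ := rfl

instance : Group (Heisenberg R) where
  mul_assoc p q r := by ext <;> simp only [mul_def] <;> ring
  one_mul p := by ext <;> simp [mul_def, one_def]
  mul_one p := by ext <;> simp [mul_def, one_def]
  inv_mul_cancel p := by ext <;> simp only [mul_def, inv_def, one_def] <;> ring

def central : Multiplicative R →* Heisenberg R where
  toFun k := ⟨0, 0, k.toAdd⟩
  map_one' := rfl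
  map_mul' _ _ := by ext <;> simp [mul_def]

lemma central_injective : Function.Injective (central : Multiplicative R →* Heisenberg R) :=
  fun _ _ h => congrArg Heisenberg.c h

lemma commute_central (p : Heisenberg R) (k : Multiplicative R) : Commute p (central k) := by
  ext <;> simp [mul_def, central, add_comm]

@[simp] lemma pow_a (p : Heisenberg R) (n : ℕ) : (p ^ n).a = n * p.a := by
  induction n with
  | zero => simp [one_def]
  | succ n ih => simp only [pow_succ, mul_def, ih]; push_cast; ring

@[simp] lemma pow_b (p : Heisenberg R) (n : ℕ) : (p ^ n).b = n * p.b := by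
  induction n with
  | zero => simp [one_def]
  | succ n ih => simp only [pow_succ, mul_def, ih]; push_cast; ring

lemma commutatorElement_eq (p q : Heisenberg R) :
    ⁅p, q⁆ = central (.ofAdd (p.a * q.b - q.a * p.b)) := by
  ext <;> simp [commutatorElement_def, mul_def, inv_def, central]
  ring

end Heisenberg

def toHeisenberg : FreeGroup (Fin 2) →* Heisenberg ℤ := FreeGroup.lift ![⟨1, 0, 0⟩, ⟨0, 1, 0⟩]

@[simp] lemma toHeisenberg_xgen : toHeisenberg xgen = ⟨1, 0, 0⟩ := FreeGroup.lift_apply_of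
@[simp] lemma toHeisenberg_ygen : toHeisenberg ygen = ⟨0, 1, 0⟩ := FreeGroup.lift_apply_of

lemma toHeisenberg_commutator_pow (n : ℕ) :
    toHeisenberg ⁅xgen ^ n, ygen ^ n⁆ = Heisenberg.central (.ofAdd ((n : ℤ) ^ 2)) := by
  simp [Heisenberg.commutatorElement_eq, sq]

def cExponent : FreeGroup (Fin 3) →* Multiplicative ℤ :=
  FreeGroup.lift fun i => if i = 2 then .ofAdd 1 else 1

lemma toHeisenberg_phiHom (g : FreeGroup (Fin 3)) :
    toHeisenberg (phiHom g) = toHeisenberg (psiHom g) * Heisenberg.central (cExponent g) := by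
  induction g using FreeGroup.induction_on with
  | C1 => simp
  | of i =>
    fin_cases i <;> simp [phiHom, psiHom, cExponent, Heisenberg.commutatorElement_eq]
  | inv_of i ih =>
    simp only [map_inv, ih, mul_inv_rev]
    exact ((Heisenberg.commute_central _ _).inv_inv).eq.symm
  | mul g h ihg ihh =>
    rw [map_mul, map_mul, map_mul, ihg, ihh, map_mul, map_mul, map_mul Heisenberg.central,
      mul_assoc, ← mul_assoc (Heisenberg.central _), ← (Heisenberg.commute_central _ _).eq,
      mul_assoc, mul_assoc]

lemma toAdd_cExponent_mk_le (w : List (Fin 3 × Bool)) :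
    (cExponent (FreeGroup.mk w)).toAdd ≤ w.countP (fun p => decide (p.1 = 2)) := by
  rw [cExponent, FreeGroup.lift_mk]
  induction w with
  | nil => simp
  | cons p w ih =>
    obtain ⟨i, b⟩ := p
    rw [List.map_cons, List.prod_cons, toAdd_mul, List.countP_cons]
    by_cases hi : i = 2 <;> cases b <;> simp [hi] at ih ⊢ <;> omega

theorem count_c_ge_n_squared_general (n : ℕ) (w : List (Fin 3 × Bool))
    (hphi : phiHom (FreeGroup.mk w) = ⁅xgen ^ n, ygen ^ n⁆)
    (hpsi : psiHom (FreeGroup.mk w) = 1) :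
    n ^ 2 ≤ w.countP (fun p => decide (p.1 = 2)) := by
  have h := toHeisenberg_phiHom (FreeGroup.mk w)
  rw [hphi, hpsi, map_one, one_mul, toHeisenberg_commutator_pow] at h
  have hc : (n : ℤ) ^ 2 = (cExponent (FreeGroup.mk w)).toAdd :=
    congrArg Multiplicative.toAdd (Heisenberg.central_injective h)
  exact_mod_cast hc ▸ toAdd_cExponent_mk_le w

/-- Fix `n ≥ 1`.  If `w` is a word in the letters `{a, b, c}^{±1}` such that
`φ(w) = [x^n, y^n]` and `ψ(w) = 1` in `F_2`, then `w` contains at least `n²` occurrences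
of the letters `c` and `c⁻¹`. -/
theorem count_c_ge_n_squared (n : ℕ) (hn : 1 ≤ n) (w : List (Fin 3 × Bool))
    (hphi : phiHom (FreeGroup.mk w) = ⁅xgen ^ n, ygen ^ n⁆)
    (hpsi : psiHom (FreeGroup.mk w) = 1) :
    n ^ 2 ≤ w.countP (fun p => decide (p.1 = 2)) :=
  count_c_ge_n_squared_general n w hphi hpsi
end
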